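/- arXiv:1812.02422 — 7 statements merged into one kernel-verified Lean document; each statement's English description precedes it below -/
import Mathlib

section
/- For every connected graph G on n vertices and every k with 1 ≤ k ≤ n, G has at least n - k + 1 connected induced subgraphs of order k. -/
open SimpleGraph

/-- The number of connected induced subgraphs of `G`, i.e. the number of nonempty
vertex subsets of `G` inducing a connected subgraph. -/
noncomputable def numConn {V : Type*} (G : SimpleGraph V) : ℕ :=
  Nat.card {s : Finset V // (G.induce (s : Set V)).Connected}

/-- The number of `k`-vertex connected induced subgraphs of `G`. -/
noncomputable def numConnK {V : Type*} (G : SimpleGraph V) (k : ℕ) : ℕ :=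
  Nat.card {s : Finset V // s.card = k ∧ (G.induce (s : Set V)).Connected}

/-- The number of connected induced subgraphs of `G` containing the vertex `v`. -/
noncomputable def numConnAt {V : Type*} (G : SimpleGraph V) (v : V) : ℕ :=
  Nat.card {s : Finset V // v ∈ s ∧ (G.induce (s : Set V)).Connected}

/-- The star graph on `Fin n`, with center `0`. -/
def starGraph (n : ℕ) : SimpleGraph (Fin n) :=
  SimpleGraph.fromRel (fun i _ => (i : ℕ) = 0)

/-- The tadpole graph `G_{p,q}` (for `p ≥ 3`): the path `0 - 1 - ⋯ - (p+q-1)` together with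
the edge `{0, p-1}` closing a cycle of length `p`; the tail of length `q` hangs at `p-1`. -/
def tadpole (p q : ℕ) : SimpleGraph (Fin (p + q)) :=
  SimpleGraph.fromRel (fun i j => (i : ℕ) + 1 = j ∨ ((i : ℕ) = 0 ∧ (j : ℕ) = p - 1))

/-- The banner graph `B_n` (for `n ≥ 4`): a `4`-cycle `0-1-2-3-0` with `n - 4` pendant
vertices attached to vertex `0`. -/
def banner (n : ℕ) : SimpleGraph (Fin n) :=
  SimpleGraph.fromRel (fun i j =>
    ((i : ℕ) + 1 = j ∧ (j : ℕ) ≤ 3) ∨ ((i : ℕ) = 0 ∧ (j : ℕ) = 3) ∨ ((i : ℕ) = 0 ∧ 4 ≤ (j : ℕ)))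

/-- The graph `Q_n` (for `n > 2`): the star on `n` vertices with center `0`, plus an edge
joining the two leaves `1` and `2`. -/
def Qgraph (n : ℕ) : SimpleGraph (Fin n) :=
  SimpleGraph.fromRel (fun i j => (i : ℕ) = 0 ∨ ((i : ℕ) = 1 ∧ (j : ℕ) = 2))

/-!
Grow a connected vertex set one vertex at a time, from a connected `k`-set up to the whole
vertex set (a connected proper subset of a connected set always has a neighbour inside it
whose addition keeps it connected). Each time a vertex `b` is added, a connected `k`-set
containing `b` can be grown from `{b}` inside the enlarged set, and it is new because it
contains `b`. Starting from one connected `k`-set, the `n - k` additions give `n - k + 1`.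
-/

namespace SimpleGraph

variable {V : Type*} {G : SimpleGraph V}

lemma connected_induce_singleton (v : V) : (G.induce {v}).Connected := by
  rw [induce_singleton_eq_top]
  exact connected_top

lemma exists_connected_induce_insert_of_ssubset [DecidableEq V] {s t : Finset V} (hst : s ⊂ t)
    (hs : (G.induce (s : Set V)).Connected) (ht : (G.induce (t : Set V)).Connected) :
    ∃ b ∈ t, b ∉ s ∧ (G.induce (insert b s : Finset V)).Connected := by
  obtain ⟨⟨u, hu⟩⟩ := hs.nonempty
  obtain ⟨w, hwt, hws⟩ := Finset.exists_of_ssubset hst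
  obtain ⟨p⟩ := ht ⟨u, hst.subset hu⟩ ⟨w, hwt⟩
  obtain ⟨d, -, hd₁, hd₂⟩ := p.exists_boundary_dart {x | (x : V) ∈ s} hu hws
  refine ⟨d.snd, d.snd.2, hd₂, ?_⟩
  rw [Finset.coe_insert, Set.insert_eq, Set.union_comm]
  exact connected_induce_union hs.preconnected (connected_induce_singleton _).preconnected
    hd₁ rfl d.adj

lemma exists_connected_induce_subset_of_card [DecidableEq V] {t : Finset V}
    (ht : (G.induce (t : Set V)).Connected) {v : V} (hv : v ∈ t) {j : ℕ} (hj₁ : 1 ≤ j)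
    (hj₂ : j ≤ t.card) :
    ∃ s ⊆ t, v ∈ s ∧ s.card = j ∧ (G.induce (s : Set V)).Connected := by
  induction j, hj₁ using Nat.le_induction with
  | base =>
    refine ⟨{v}, by simpa using hv, Finset.mem_singleton_self v, Finset.card_singleton v, ?_⟩
    rw [Finset.coe_singleton]
    exact connected_induce_singleton v
  | succ j hj ih =>
    obtain ⟨s, hst, hvs, rfl, hs⟩ := ih (by omega)
    have hssub : s ⊂ t := Finset.ssubset_iff_subset_ne.mpr ⟨hst, by rintro rfl; omega⟩
    obtain ⟨b, hbt, hbs, hbs'⟩ := exists_connected_induce_insert_of_ssubset hssub hs ht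
    exact ⟨insert b s, Finset.insert_subset hbt hst, Finset.mem_insert_of_mem hvs,
      Finset.card_insert_of_notMem hbs, hbs'⟩

open Classical in
noncomputable def connSubsets (G : SimpleGraph V) (P : Finset V) (k : ℕ) : Finset (Finset V) :=
  {s ∈ P.powersetCard k | (G.induce (s : Set V)).Connected}

lemma mem_connSubsets {P s : Finset V} {k : ℕ} :
    s ∈ G.connSubsets P k ↔ s ⊆ P ∧ s.card = k ∧ (G.induce (s : Set V)).Connected := by
  simp [connSubsets, and_assoc]

lemma numConnK_eq_card_connSubsets_univ [Fintype V] (k : ℕ) :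
    numConnK G k = (G.connSubsets Finset.univ k).card := by
  classical
  rw [numConnK, Nat.card_eq_fintype_card, Fintype.card_subtype]
  congr 1
  ext s
  simp [mem_connSubsets]

lemma card_connSubsets_lt_insert [DecidableEq V] {P : Finset V} {b : V} (hb : b ∉ P)
    (hbP : (G.induce (insert b P : Finset V)).Connected) {k : ℕ} (hk₁ : 1 ≤ k)
    (hk₂ : k ≤ P.card + 1) :
    (G.connSubsets P k).card < (G.connSubsets (insert b P) k).card := by
  apply Finset.card_lt_card
  obtain ⟨T, hTP, hbT, hTk, hT⟩ := exists_connected_induce_subset_of_card hbP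
    (Finset.mem_insert_self b P) hk₁ (by rwa [Finset.card_insert_of_notMem hb])
  refine Finset.ssubset_iff_of_subset (fun s hs => ?_) |>.mpr ⟨T, ?_, fun hT' => ?_⟩
  · obtain ⟨hsP, hsk, hs⟩ := mem_connSubsets.mp hs
    exact mem_connSubsets.mpr ⟨hsP.trans (Finset.subset_insert b P), hsk, hs⟩
  · exact mem_connSubsets.mpr ⟨hTP, hTk, hT⟩
  · exact hb ((mem_connSubsets.mp hT').1 hbT)

lemma Connected.exists_connected_card_connSubsets [Fintype V] [DecidableEq V]
    (hG : G.Connected) {k : ℕ} (hk : 1 ≤ k) {j : ℕ} (hkj : k ≤ j) (hj : j ≤ Fintype.card V) :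
    ∃ P : Finset V, P.card = j ∧ (G.induce (P : Set V)).Connected ∧
      j - k + 1 ≤ (G.connSubsets P k).card := by
  have huniv : (G.induce (Finset.univ : Finset V)).Connected := by
    rw [Finset.coe_univ]
    exact (induceUnivIso G).connected_iff.mpr hG
  induction j, hkj using Nat.le_induction with
  | base =>
    obtain ⟨v⟩ := hG.nonempty
    obtain ⟨P, -, -, hPk, hP⟩ := exists_connected_induce_subset_of_card huniv
      (Finset.mem_univ v) hk (by simpa using hj)
    refine ⟨P, hPk, hP, ?_⟩
    rw [Nat.sub_self, zero_add]
    exact Finset.card_pos.mpr ⟨P, mem_connSubsets.mpr ⟨subset_rfl, hPk, hP⟩⟩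
  | succ j hkj ih =>
    obtain ⟨P, rfl, hP, hcard⟩ := ih (by omega)
    have hPuniv : P ⊂ Finset.univ :=
      Finset.ssubset_univ_iff.mpr fun h => by simp [h] at hj
    obtain ⟨b, -, hb, hbP⟩ := exists_connected_induce_insert_of_ssubset hPuniv hP huniv
    refine ⟨insert b P, Finset.card_insert_of_notMem hb, hbP, ?_⟩
    have := card_connSubsets_lt_insert hb hbP hk (by omega)
    omega

end SimpleGraph

theorem stmt2 {V : Type*} [Fintype V] (G : SimpleGraph V) (hG : G.Connected) (k : ℕ)
    (hk1 : 1 ≤ k) (hk2 : k ≤ Fintype.card V) :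
    Fintype.card V - k + 1 ≤ numConnK G k := by
  classical
  obtain ⟨P, hPcard, -, hP⟩ := hG.exists_connected_card_connSubsets hk1 hk2 le_rfl
  rw [Finset.eq_univ_of_card P hPcard] at hP
  rwa [numConnK_eq_card_connSubsets_univ]
end

section
/- The tadpole graph G_{p,q} has exactly binomial(p,2) + binomial(q+1,2) + (q+1)(p^2 - p + 2)/2 connected induced subgraphs. -/
open SimpleGraph

/-!
Number the vertices of `G_{p,q}` along the path `0, …, p + q - 1`, the extra edge being
`{0, p - 1}`. A vertex set induces a connected subgraph iff it is an interval `[a, b]`, or it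
runs through the edge `{0, p - 1}`: an interval `[0, c]` with `p - 1 ≤ c` from which a nonempty
interval `[g, h]` with `0 < g ≤ h < p - 1` has been removed. Indeed a gap in a connected set can
only be bridged by the edge `{0, p - 1}`, and two gaps would cut off the vertices between them.
There are `(p + q + 1).choose 2` intervals and `(p - 1).choose 2 * (q + 1)` sets of the second kind.
-/

open Finset

lemma Finset.eq_Icc_min'_max' {α : Type*} [LinearOrder α] [LocallyFiniteOrder α]
    {t : Finset α} (h : t.Nonempty) (ht : (t : Set α).OrdConnected) :
    t = Icc (t.min' h) (t.max' h) := by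
  ext x
  refine ⟨fun hx => mem_Icc.2 ⟨t.min'_le x hx, t.le_max' x hx⟩, fun hx => ?_⟩
  exact ht.out (t.min'_mem h) (t.max'_mem h) (mem_Icc.1 hx)

lemma Finset.card_filter_le_product_self {α : Type*} [LinearOrder α] (t : Finset α) :
    #{x ∈ t ×ˢ t | x.1 ≤ x.2} = (#t + 1).choose 2 := by
  rw [← card_sym2]
  refine card_nbij' (fun x => s(x.1, x.2)) (fun z => (z.inf, z.sup)) ?_ ?_ ?_ ?_
  · intro x hx
    simp only [coe_filter, mem_product, Set.mem_ofPred_eq] at hx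
    simp [hx.1.1, hx.1.2]
  · intro z hz
    induction z with | _ a b
    simp only [mem_coe, mk_mem_sym2_iff] at hz
    rcases le_total a b with h | h <;> simp [h, hz.1, hz.2]
  · intro x hx
    simp only [coe_filter, Set.mem_ofPred_eq] at hx
    simp [hx.2]
  · intro z _
    exact Sym2.sortEquiv.symm_apply_apply z

section Intervals

variable {α : Type*} [LinearOrder α] [LocallyFiniteOrder α]

lemma Finset.card_image_Icc_filter_le (t : Finset α) :
    #({x ∈ t ×ˢ t | x.1 ≤ x.2}.image fun x => Icc x.1 x.2) = (#t + 1).choose 2 := by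
  rw [card_image_of_injOn, card_filter_le_product_self]
  rintro ⟨a, b⟩ hab ⟨c, d⟩ - h
  simp only [coe_filter, Set.mem_ofPred_eq] at hab h
  have h' : Set.Icc a b = Set.Icc c d := by rw [← coe_Icc, h, coe_Icc]
  rw [Set.Icc_eq_Icc_iff hab.2] at h'
  rw [h'.1, h'.2]

variable [LocallyFiniteOrderBot α]

lemma Finset.Iic_sdiff_Icc_injOn :
    Set.InjOn (fun x : (α × α) × α => Iic x.2 \ Icc x.1.1 x.1.2)
      {x | x.1.1 ≤ x.1.2 ∧ x.1.2 < x.2} := by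
  rintro ⟨⟨g, h⟩, c⟩ ⟨hgh, hhc⟩ ⟨⟨g', h'⟩, c'⟩ ⟨hgh', hhc'⟩ he
  simp only at he hgh hhc hgh' hhc'
  have top_mem {g h c : α} (hhc : h < c) : c ∈ Iic c \ Icc g h :=
    mem_sdiff.2 ⟨mem_Iic.2 le_rfl, fun hc => (mem_Icc.1 hc).2.not_gt hhc⟩
  have hc : c = c' := le_antisymm (mem_Iic.1 (mem_sdiff.1 (he ▸ top_mem hhc)).1)
    (mem_Iic.1 (mem_sdiff.1 (he ▸ top_mem hhc')).1)
  subst hc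
  have hI : Icc g h = Icc g' h' := by
    rw [← Finset.sdiff_sdiff_eq_self ((Icc_subset_Icc_right hhc.le).trans Icc_subset_Iic_self),
      he, Finset.sdiff_sdiff_eq_self ((Icc_subset_Icc_right hhc'.le).trans Icc_subset_Iic_self)]
  have hI' : Set.Icc g h = Set.Icc g' h' := by rw [← coe_Icc, hI, coe_Icc]
  rw [Set.Icc_eq_Icc_iff hgh] at hI'
  rw [hI'.1, hI'.2]

lemma Finset.Icc_ne_Iic_sdiff_Icc {a b c g h z : α} (hzg : z < g) (hgh : g ≤ h) (hhc : h < c) :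
    Icc a b ≠ Iic c \ Icc g h := by
  intro he
  have hz : z ∈ Icc a b := he ▸ mem_sdiff.2
    ⟨mem_Iic.2 (hzg.le.trans (hgh.trans hhc.le)), fun hz => (mem_Icc.1 hz).1.not_gt hzg⟩
  have hc : c ∈ Icc a b :=
    he ▸ mem_sdiff.2 ⟨mem_Iic.2 le_rfl, fun hc => (mem_Icc.1 hc).2.not_gt hhc⟩
  have hg : g ∈ Icc a b :=
    mem_Icc.2 ⟨(mem_Icc.1 hz).1.trans hzg.le, (hgh.trans hhc.le).trans (mem_Icc.1 hc).2⟩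
  rw [he] at hg
  exact (mem_sdiff.1 hg).2 (mem_Icc.2 ⟨le_rfl, hgh⟩)

end Intervals

namespace SimpleGraph

variable {V : Type*} {G : SimpleGraph V}

lemma exists_adj_of_induce_connected {s : Set V} (h : (G.induce s).Connected) {x y : V}
    (hx : x ∈ s) (hy : y ∈ s) {P : V → Prop} (hPx : P x) (hPy : ¬ P y) :
    ∃ u ∈ s, ∃ v ∈ s, P u ∧ ¬ P v ∧ G.Adj u v := by
  obtain ⟨w⟩ := h.preconnected ⟨x, hx⟩ ⟨y, hy⟩
  obtain ⟨d, -, hd1, hd2⟩ := w.exists_boundary_dart {u | P u.1} hPx hPy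
  exact ⟨d.fst, d.fst.2, d.snd, d.snd.2, hd1, hd2, d.adj⟩

lemma induce_connected_of_ordConnected {n : ℕ} {G : SimpleGraph (Fin n)}
    (hG : ∀ i j : Fin n, (i : ℕ) + 1 = j → G.Adj i j) {s : Set (Fin n)} (hne : s.Nonempty)
    (hs : s.OrdConnected) : (G.induce s).Connected := by
  have reach : ∀ k : ℕ, ∀ u v : s, (u : ℕ) + k = v → (G.induce s).Reachable u v := by
    intro k
    induction k with
    | zero => exact fun u v h => by rw [Subtype.ext (Fin.ext h)]
    | succ k ih =>
      intro u v h
      let w : Fin n := ⟨(u : Fin n) + k, by omega⟩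
      have hw : w ∈ s :=
        hs.out u.2 v.2 ⟨Fin.le_def.2 (by simp [w]), Fin.le_def.2 (by simp [w]; omega)⟩
      have hwv : G.Adj w v := hG w v (by simp only [w]; omega)
      exact (ih u ⟨w, hw⟩ rfl).trans (induce_adj.2 hwv).reachable
  refine (connected_iff _).2 ⟨fun u v => ?_, hne.to_subtype⟩
  rcases le_total u v with h | h
  · exact reach ((v : ℕ) - u) u v (by rw [Subtype.mk_le_mk, Fin.le_def] at h; omega)
  · exact (reach ((u : ℕ) - v) v u (by rw [Subtype.mk_le_mk, Fin.le_def] at h; omega)).symm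

end SimpleGraph

lemma Nat.choose_two_mul_two (n : ℕ) : n.choose 2 * 2 = n * (n - 1) := by
  rw [Nat.choose_two_right, Nat.div_mul_cancel (Nat.even_mul_pred_self n).two_dvd]

lemma Nat.add_add_one_choose_two_add_choose_two_mul {p q : ℕ} (hp : 1 ≤ p) :
    (p + q + 1).choose 2 + (p - 1).choose 2 * (q + 1) =
      p.choose 2 + (q + 1).choose 2 + (q + 1) * (p ^ 2 - p + 2) / 2 := by
  have hsq : p ^ 2 - p + 2 = p.choose 2 * 2 + 2 := by
    rw [Nat.choose_two_mul_two, sq, Nat.mul_sub_one]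
  rw [hsq, show (q + 1) * (p.choose 2 * 2 + 2) = (q + 1) * (p.choose 2 + 1) * 2 by ring,
    Nat.mul_div_cancel _ two_pos]
  obtain ⟨r, rfl⟩ : ∃ r, p = r + 1 := ⟨p - 1, by omega⟩
  have hA := Nat.choose_two_mul_two (r + 1 + q + 1)
  have hD := Nat.choose_two_mul_two (q + 1)
  have hC := Nat.choose_two_mul_two (r + 1)
  have hCB : (r + 1).choose 2 = r + r.choose 2 := by
    rw [Nat.choose_succ_succ', Nat.choose_one_right]
  rw [Nat.add_sub_cancel] at hA hD hC ⊢
  apply Nat.eq_of_mul_eq_mul_right two_pos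
  linear_combination hA - hD - hC - 2 * (q + 1) * hCB

section Tadpole

variable {p q : ℕ}

lemma tadpole_adj {i j : Fin (p + q)} :
    (tadpole p q).Adj i j ↔ i ≠ j ∧ ((i : ℕ) + 1 = j ∨ (j : ℕ) + 1 = i ∨
      ((i : ℕ) = 0 ∧ (j : ℕ) = p - 1) ∨ ((j : ℕ) = 0 ∧ (i : ℕ) = p - 1)) := by
  simp only [tadpole, fromRel_adj]
  tauto

lemma tadpole_adj_of_succ {i j : Fin (p + q)} (h : (i : ℕ) + 1 = j) : (tadpole p q).Adj i j :=
  tadpole_adj.2 ⟨fun hij => by subst hij; omega, Or.inl h⟩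

lemma tadpole_induce_Icc_connected {a b : Fin (p + q)} (hab : a ≤ b) :
    ((tadpole p q).induce ((Icc a b : Finset (Fin (p + q))) : Set (Fin (p + q)))).Connected := by
  rw [coe_Icc]
  exact induce_connected_of_ordConnected (fun _ _ => tadpole_adj_of_succ)
    (Set.nonempty_Icc.2 hab) Set.ordConnected_Icc

lemma tadpole_induce_Iic_sdiff_Icc_connected {g h c : Fin (p + q)} (hg : 0 < (g : ℕ))
    (hgh : g ≤ h) (hh : (h : ℕ) + 2 ≤ p) (hc : p ≤ (c : ℕ) + 1) :
    ((tadpole p q).induce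
      ((Iic c \ Icc g h : Finset (Fin (p + q))) : Set (Fin (p + q)))).Connected := by
  have hsplit : ((Iic c \ Icc g h : Finset _) : Set (Fin (p + q))) = Set.Iio g ∪ Set.Ioc h c := by
    rw [Fin.le_def] at hgh
    ext x
    simp only [coe_sdiff, coe_Iic, coe_Icc, Set.mem_sdiff, Set.mem_Iic, Set.mem_Icc,
      Set.mem_union, Set.mem_Iio, Set.mem_Ioc, Fin.le_def, Fin.lt_def]
    omega
  let zero : Fin (p + q) := ⟨0, by omega⟩
  let top : Fin (p + q) := ⟨p - 1, by omega⟩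
  have hzero : zero ∈ Set.Iio g := Fin.lt_def.2 hg
  have htop : top ∈ Set.Ioc h c :=
    ⟨Fin.lt_def.2 (by simp only [top]; omega), Fin.le_def.2 (by simp only [top]; omega)⟩
  have hadj : (tadpole p q).Adj zero top :=
    tadpole_adj.2 ⟨fun h0 => by simp only [zero, top, Fin.ext_iff] at h0; omega,
      Or.inr (Or.inr (Or.inl ⟨rfl, rfl⟩))⟩
  rw [hsplit]
  exact connected_induce_union
    (induce_connected_of_ordConnected (fun _ _ => tadpole_adj_of_succ) ⟨_, hzero⟩
      Set.ordConnected_Iio).preconnected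
    (induce_connected_of_ordConnected (fun _ _ => tadpole_adj_of_succ) ⟨_, htop⟩
      Set.ordConnected_Ioc).preconnected hzero htop hadj

variable {s : Finset (Fin (p + q))}

lemma tadpole_closing_edge_of_gap
    (hs : ((tadpole p q).induce (s : Set (Fin (p + q)))).Connected)
    {x y g : Fin (p + q)} (hx : x ∈ s) (hy : y ∈ s) (hg : g ∉ s) (hxg : x < g) (hgy : g < y) :
    ∃ u ∈ s, ∃ v ∈ s, (u : ℕ) = 0 ∧ (v : ℕ) = p - 1 ∧ u < g ∧ g < v := by
  obtain ⟨u, hu, v, hv, hug, hvg, huv⟩ :=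
    exists_adj_of_induce_connected hs hx hy (P := (· < g)) hxg (not_lt.2 hgy.le)
  have hvg' : (v : ℕ) ≠ g := fun h => hg (Fin.ext h ▸ hv)
  rw [tadpole_adj] at huv
  rw [not_lt, Fin.le_def] at hvg
  rw [Fin.lt_def] at hug
  rcases huv.2 with h | h | ⟨h1, h2⟩ | ⟨h1, h2⟩
  · omega
  · omega
  · exact ⟨u, hu, v, hv, h1, h2, Fin.lt_def.2 hug, Fin.lt_def.2 (by omega)⟩
  · omega

lemma tadpole_not_mem_between_gaps
    (hs : ((tadpole p q).induce (s : Set (Fin (p + q)))).Connected)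
    {y g₁ g₂ v : Fin (p + q)} (hy : y ∈ s) (hg₁ : g₁ ∉ s) (hg₂ : g₂ ∉ s) (hyg₁ : y < g₁)
    (hg₂p : (g₂ : ℕ) + 2 ≤ p) (hg₁v : g₁ ≤ v) (hvg₂ : v ≤ g₂) : v ∉ s := by
  intro hv
  have hv₁ : g₁ < v := lt_of_le_of_ne hg₁v (by rintro rfl; exact hg₁ hv)
  have hv₂ : v < g₂ := lt_of_le_of_ne hvg₂ (by rintro rfl; exact hg₂ hv)
  obtain ⟨u, -, w, hw, ⟨hu₁, hu₂⟩, hw', huw⟩ := exists_adj_of_induce_connected hs hv hy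
    (P := fun u => g₁ < u ∧ u < g₂) ⟨hv₁, hv₂⟩ fun h => lt_asymm hyg₁ h.1
  have hwg₁ : (w : ℕ) ≠ g₁ := fun h => hg₁ (Fin.ext h ▸ hw)
  have hwg₂ : (w : ℕ) ≠ g₂ := fun h => hg₂ (Fin.ext h ▸ hw)
  simp only [Fin.lt_def, not_and_or, not_lt] at hu₁ hu₂ hw'
  rw [tadpole_adj] at huw
  omega

lemma tadpole_eq_Icc_or_eq_Iic_sdiff_Icc
    (hs : ((tadpole p q).induce (s : Set (Fin (p + q)))).Connected) :
    (∃ a b : Fin (p + q), a ≤ b ∧ s = Icc a b) ∨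
      ∃ g h c : Fin (p + q), 0 < (g : ℕ) ∧ g ≤ h ∧ (h : ℕ) + 2 ≤ p ∧ p ≤ (c : ℕ) + 1 ∧
        s = Iic c \ Icc g h := by
  obtain ⟨⟨x₀, hx₀⟩⟩ := hs.nonempty
  have hne : s.Nonempty := ⟨x₀, hx₀⟩
  set a := s.min' hne
  set c := s.max' hne
  have hsub : s ⊆ Icc a c := fun x hx => mem_Icc.2 ⟨s.min'_le x hx, s.le_max' x hx⟩
  have hedge : ∀ g ∈ Icc a c \ s,
      ∃ u ∈ s, ∃ v ∈ s, (u : ℕ) = 0 ∧ (v : ℕ) = p - 1 ∧ u < g ∧ g < v := by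
    intro g hg
    obtain ⟨⟨hag, hgc⟩, hgs⟩ := mem_sdiff.1 hg |>.imp_left mem_Icc.1
    exact tadpole_closing_edge_of_gap hs (s.min'_mem hne) (s.max'_mem hne) hgs
      (lt_of_le_of_ne hag (by rintro rfl; exact hgs (s.min'_mem hne)))
      (lt_of_le_of_ne hgc (by rintro rfl; exact hgs (s.max'_mem hne)))
  rcases (Icc a c \ s).eq_empty_or_nonempty with hgaps | hgaps
  · exact Or.inl ⟨a, c, s.min'_le_max' hne, hsub.antisymm (sdiff_eq_empty_iff_subset.1 hgaps)⟩
  obtain ⟨u, hu, v, hv, hu0, hvp, -, -⟩ := hedge _ hgaps.choose_spec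
  have ha : (a : ℕ) = 0 := by have := Fin.le_def.1 (s.min'_le u hu); omega
  have hc : p ≤ (c : ℕ) + 1 := by have := Fin.le_def.1 (s.le_max' v hv); omega
  have hgap : ∀ g ∈ Icc a c \ s, 0 < (g : ℕ) ∧ (g : ℕ) + 2 ≤ p := by
    intro g hg
    obtain ⟨u, -, v, -, hu0, hvp, hug, hgv⟩ := hedge g hg
    rw [Fin.lt_def] at hug hgv
    omega
  have hord : ((Icc a c \ s : Finset (Fin (p + q))) : Set (Fin (p + q))).OrdConnected := by
    refine ⟨fun g₁ hg₁ g₂ hg₂ w hw => ?_⟩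
    obtain ⟨hg₁c, hg₁s⟩ := mem_sdiff.1 hg₁
    obtain ⟨hg₂c, hg₂s⟩ := mem_sdiff.1 hg₂
    refine mem_sdiff.2
      ⟨mem_Icc.2 ⟨(mem_Icc.1 hg₁c).1.trans hw.1, hw.2.trans (mem_Icc.1 hg₂c).2⟩,
        tadpole_not_mem_between_gaps hs hu hg₁s hg₂s ?_ (hgap g₂ hg₂).2 hw.1 hw.2⟩
    exact Fin.lt_def.2 (by have := (hgap g₁ hg₁).1; omega)
  set g := (Icc a c \ s).min' hgaps
  set h := (Icc a c \ s).max' hgaps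
  refine Or.inr ⟨g, h, c, (hgap g (min'_mem _ _)).1, min'_le_max' _ hgaps,
    (hgap h (max'_mem _ _)).2, hc, ?_⟩
  have hIic : Iic c = Icc a c := by
    ext x
    simp only [mem_Iic, mem_Icc, Fin.le_def, ha]
    omega
  rw [hIic, ← eq_Icc_min'_max' hgaps hord]
  exact (Finset.sdiff_sdiff_eq_self hsub).symm

lemma tadpole_induce_connected_iff :
    ((tadpole p q).induce (s : Set (Fin (p + q)))).Connected ↔
      (∃ a b : Fin (p + q), a ≤ b ∧ s = Icc a b) ∨
        ∃ g h c : Fin (p + q), 0 < (g : ℕ) ∧ g ≤ h ∧ (h : ℕ) + 2 ≤ p ∧ p ≤ (c : ℕ) + 1 ∧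
          s = Iic c \ Icc g h := by
  refine ⟨tadpole_eq_Icc_or_eq_Iic_sdiff_Icc, ?_⟩
  rintro (⟨a, b, hab, rfl⟩ | ⟨g, h, c, hg, hgh, hh, hc, rfl⟩)
  · exact tadpole_induce_Icc_connected hab
  · exact tadpole_induce_Iic_sdiff_Icc_connected hg hgh hh hc

end Tadpole

theorem numConn_tadpole {p q : ℕ} (hp : 2 ≤ p) :
    numConn (tadpole p q) = (p + q + 1).choose 2 + (p - 1).choose 2 * (q + 1) := by
  classical
  let zero : Fin (p + q) := ⟨0, by omega⟩
  let top : Fin (p + q) := ⟨p - 1, by omega⟩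
  let paths := {x ∈ (univ ×ˢ univ : Finset (Fin (p + q) × Fin (p + q))) | x.1 ≤ x.2}.image
    fun x => Icc x.1 x.2
  let wraps := ({x ∈ Ioo zero top ×ˢ Ioo zero top | x.1 ≤ x.2} ×ˢ Ici top).image
    fun x : (Fin (p + q) × Fin (p + q)) × Fin (p + q) => Iic x.2 \ Icc x.1.1 x.1.2
  have hconn : ({s : Finset (Fin (p + q)) |
      ((tadpole p q).induce (s : Set (Fin (p + q)))).Connected} : Finset _) = paths ∪ wraps := by
    ext s
    simp only [paths, wraps, mem_filter, mem_univ, true_and, tadpole_induce_connected_iff,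
      mem_union, mem_image, mem_product, mem_Ioo, mem_Ici, Prod.exists, Fin.lt_def, Fin.le_def]
    refine or_congr (by simp only [eq_comm]) (exists₃_congr fun g h c => ?_)
    simp only [zero, top, eq_comm (a := s)]
    constructor
    · rintro ⟨hg, hgh, hh, hc, rfl⟩
      exact ⟨by omega, rfl⟩
    · rintro ⟨⟨⟨⟨⟨hg, -⟩, -, hh⟩, hgh⟩, hc⟩, rfl⟩
      exact ⟨hg, hgh, by omega, by omega, rfl⟩
  have hdisj : Disjoint paths wraps := by
    simp only [paths, wraps, Finset.disjoint_left, mem_image]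
    rintro _ ⟨⟨a, b⟩, -, rfl⟩ ⟨⟨⟨g, h⟩, c⟩, hx, he⟩
    simp only [mem_product, mem_filter, mem_Ioo, mem_Ici] at hx
    exact Icc_ne_Iic_sdiff_Icc hx.1.1.1.1 hx.1.2 (hx.1.1.2.2.trans_le hx.2) he.symm
  have hinj : Set.InjOn (fun x : (Fin (p + q) × Fin (p + q)) × Fin (p + q) =>
      Iic x.2 \ Icc x.1.1 x.1.2) ↑({x ∈ Ioo zero top ×ˢ Ioo zero top | x.1 ≤ x.2} ×ˢ Ici top) :=
    Iic_sdiff_Icc_injOn.mono fun x hx => by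
      simp only [mem_coe, mem_product, mem_filter, mem_Ioo, mem_Ici] at hx
      exact ⟨hx.1.2, hx.1.1.2.2.trans_le hx.2⟩
  rw [numConn, Nat.card_eq_fintype_card, Fintype.card_subtype, hconn,
    card_union_of_disjoint hdisj, card_image_Icc_filter_le, card_image_of_injOn hinj,
    card_product, card_filter_le_product_self, Fin.card_Ioo, Fin.card_Ici, card_univ, Fintype.card_fin]
  simp only [zero, top]
  rw [show p - 1 - 0 - 1 + 1 = p - 1 by omega, show p + q - (p - 1) = q + 1 by omega]

theorem stmt8 (p q : ℕ) (hp : 3 ≤ p) :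
    numConn (tadpole p q) =
      p.choose 2 + (q + 1).choose 2 + (q + 1) * (p ^ 2 - p + 2) / 2 := by
  rw [numConn_tadpole (by omega), Nat.add_add_one_choose_two_add_choose_two_mul (by omega)]
end

section
/- In any tree T rooted at a vertex v, the number of subtrees of T containing v is at least |V(T)|, with equality if and only if T is a path and v is one of its endpoints. -/
open SimpleGraph

/-!
Sending `u` to the vertex set of the unique path from `v` to `u` injects the vertices into the
subtrees containing `v`: the path to `b` is an initial segment of the path to `a` whenever `b`
lies on it, so two such paths with the same vertex set have the same length and the same end.
If the count is exactly `|V|`, this injection is onto, so the whole tree is the vertex set of a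
path starting at `v`; that path spans a connected subgraph of the tree, which by minimality is
the tree itself. Conversely, in a path rooted at an end the subtrees containing the root are the
initial segments, one for each choice of the last vertex.
-/

namespace SimpleGraph

variable {V W : Type*} {G : SimpleGraph V}

lemma Iso.numConnAt_eq {H : SimpleGraph W} (φ : G ≃g H) (v : V) :
    numConnAt G v = numConnAt H (φ v) := by
  refine Nat.card_congr (Equiv.subtypeEquiv (Equiv.finsetCongr φ.toEquiv) fun s => ?_)
  have hbij : Set.BijOn φ (s : Set V) (s.map φ.toEquiv.toEmbedding : Set W) := by
    simpa using φ.toEquiv.bijective.injective.injOn.bijOn_image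
  rw [Equiv.finsetCongr_apply, (φ.induce hbij).connected_iff]
  exact and_congr_left' (Finset.mem_map' φ.toEquiv.toEmbedding).symm

lemma connected_pathGraph_induce_Iic {n : ℕ} (k : Fin n) :
    ((pathGraph n).induce (Set.Iic k)).Connected := by
  obtain ⟨k, hk⟩ := k
  induction k with
  | zero =>
    have : Set.Iic (⟨0, hk⟩ : Fin n) = {⟨0, hk⟩} := by
      ext x; simp [Fin.le_def, Fin.ext_iff]
    rw [this, induce_singleton_eq_top]
    exact connected_top
  | succ k ih =>
    have : Set.Iic (⟨k + 1, hk⟩ : Fin n) = Set.Iic ⟨k, by omega⟩ ∪ {⟨k + 1, hk⟩} := by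
      ext x; simp [Fin.le_def, Fin.ext_iff]; omega
    rw [this]
    exact connected_induce_union (ih _).preconnected (by simp [induce_singleton_eq_top])
      (Set.mem_Iic.mpr le_rfl) rfl (by simp [pathGraph_adj])

lemma ordConnected_of_preconnected_pathGraph_induce {n : ℕ} {s : Set (Fin n)}
    (hs : ((pathGraph n).induce s).Preconnected) : s.OrdConnected := by
  have between : ∀ {a b : s} (_ : ((pathGraph n).induce s).Walk a b) (x : Fin n),
      (b : Fin n) ≤ x → x ≤ a → x ∈ s := by
    intro a b w
    induction w with
    | nil => intro x h1 h2; exact le_antisymm h2 h1 ▸ Subtype.mem _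
    | @cons a c b hac _ ih =>
      intro x hbx hxa
      by_cases hxc : x ≤ c
      · exact ih x hbx hxc
      · have hac : (pathGraph n).Adj a c := hac
        rw [pathGraph_adj] at hac
        rw [Fin.le_def] at hxc hxa
        exact (Fin.ext (by omega) : x = a) ▸ a.2
  exact ⟨fun x hx y hy z hz => (hs ⟨y, hy⟩ ⟨x, hx⟩).elim fun w => between w z hz.1 hz.2⟩

lemma numConnAt_pathGraph {n : ℕ} (i : Fin n) (hi : (i : ℕ) = 0) :
    numConnAt (pathGraph n) i = n := by
  have hmin : ∀ k : Fin n, i ≤ k := fun k => Fin.le_def.mpr (hi ▸ Nat.zero_le _)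
  let e : {s : Finset (Fin n) // i ∈ s ∧ ((pathGraph n).induce (s : Set (Fin n))).Connected} ≃
      Fin n :=
    { toFun := fun s => s.1.max' ⟨i, s.2.1⟩
      invFun := fun k => ⟨Finset.Iic k, by simpa using hmin k, by
        rw [Finset.coe_Iic]; exact connected_pathGraph_induce_Iic k⟩
      left_inv := fun ⟨s, his, hs⟩ => by
        have hord := ordConnected_of_preconnected_pathGraph_induce hs.preconnected
        ext x
        simp only [Finset.mem_Iic]
        exact ⟨fun hx => hord.out his (s.max'_mem ⟨i, his⟩) ⟨hmin x, hx⟩, s.le_max' x⟩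
      right_inv := fun k => le_antisymm (Finset.max'_le _ _ _ fun _ => Finset.mem_Iic.mp)
        (Finset.le_max' _ _ (Finset.mem_Iic.mpr le_rfl)) }
  rw [numConnAt, Nat.card_congr e, Nat.card_eq_fintype_card, Fintype.card_fin]

def Walk.connectedSupport [DecidableEq V] {u v : V} (p : G.Walk v u) :
    {s : Finset V // v ∈ s ∧ (G.induce (s : Set V)).Connected} :=
  ⟨p.support.toFinset, by simp, by rw [List.coe_toFinset]; exact p.connected_induce_support⟩

lemma IsAcyclic.takeUntil_eq [DecidableEq V] (hG : G.IsAcyclic) {v a b : V} {p : G.Walk v a}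
    {q : G.Walk v b} (hp : p.IsPath) (hq : q.IsPath) (hb : b ∈ p.support) :
    p.takeUntil b hb = q :=
  congrArg Subtype.val ((hG.subsingleton_path v b).elim ⟨_, hp.takeUntil hb⟩ ⟨q, hq⟩)

lemma IsAcyclic.injective_connectedSupport [DecidableEq V] (hG : G.IsAcyclic) {v : V}
    {p : ∀ u, G.Walk v u} (hp : ∀ u, (p u).IsPath) :
    Function.Injective fun u => (p u).connectedSupport := by
  intro a b hab
  replace hab : (p a).support.toFinset = (p b).support.toFinset := congrArg Subtype.val hab
  have hb : b ∈ (p a).support := by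
    rw [← List.mem_toFinset, hab, List.mem_toFinset]; exact (p b).end_mem_support
  have ha : a ∈ (p b).support := by
    rw [← List.mem_toFinset, ← hab, List.mem_toFinset]; exact (p a).end_mem_support
  have hlen_b := congrArg Walk.length (hG.takeUntil_eq (hp a) (hp b) hb)
  have hlen_a : (p a).length ≤ (p b).length :=
    hG.takeUntil_eq (hp b) (hp a) ha ▸ (p b).length_takeUntil_le_length ha
  have hsplit := congrArg Walk.length ((p a).take_spec hb)
  rw [Walk.length_append] at hsplit
  exact (Walk.eq_of_length_eq_zero (p := (p a).dropUntil b hb) (by omega)).symm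

lemma IsTree.exists_iso_pathGraph_of_isHamiltonian [Fintype V] [DecidableEq V] (hG : G.IsTree)
    {u w : V} {p : G.Walk u w} (hp : p.IsHamiltonian) :
    ∃ φ : G ≃g pathGraph (Fintype.card V), (φ u : ℕ) = 0 := by
  have hspan : p.toSubgraph.IsSpanning := fun x => p.mem_verts_toSubgraph.mpr (hp.mem_support x)
  let ψ : pathGraph (p.length + 1) ≃g p.toSubgraph.spanningCoe := hp.isPath.pathGraphIsoToSubgraph.trans
    (p.toSubgraph.spanningCoeEquivCoeOfSpanning hspan).symm
  have hψ : ψ.symm u = 0 := ψ.symm_apply_eq.mpr (by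
    simp [ψ, Walk.IsPath.pathGraphIsoToSubgraph, Walk.pathGraphHomToSubgraph])
  have heq : p.toSubgraph.spanningCoe = G :=
    (isTree_iff_minimal_connected.mp hG).eq_of_le
      ((p.toSubgraph.spanningCoeEquivCoeOfSpanning hspan).connected_iff.mpr
        (Subgraph.connected_iff'.mp p.toSubgraph_connected))
      p.toSubgraph.spanningCoe_le
  have hlen : p.length + 1 = Fintype.card V := by
    rw [hp.length_eq, Nat.sub_add_cancel (Fintype.card_pos_iff.mpr ⟨u⟩)]
  rw [← hlen]
  exact ⟨{ toEquiv := ψ.symm.toEquiv, map_rel_iff' := ψ.symm.map_adj_iff.trans (by rw [heq]) },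
    by simp [hψ]⟩

end SimpleGraph

theorem stmt9 {V : Type*} [Fintype V] (T : SimpleGraph V) (hT : T.IsTree) (v : V) :
    Fintype.card V ≤ numConnAt T v ∧
      (numConnAt T v = Fintype.card V ↔
        ∃ φ : T ≃g pathGraph (Fintype.card V), (φ v : ℕ) = 0) := by
  classical
  choose p hp using fun u => (hT.existsUnique_path v u).exists
  have hinj := hT.isAcyclic.injective_connectedSupport hp
  have hcard : Fintype.card V ≤ numConnAt T v := by
    rw [← Nat.card_eq_fintype_card]; exact Nat.card_le_card_of_injective _ hinj
  refine ⟨hcard, fun heq => ?_, fun ⟨φ, hφ⟩ => ?_⟩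
  · have hbij := (Nat.bijective_iff_injective_and_card _).mpr
      ⟨hinj, by rw [Nat.card_eq_fintype_card, ← heq, numConnAt]⟩
    obtain ⟨u, hu⟩ := hbij.surjective ⟨Finset.univ, Finset.mem_univ v, by
      rw [Finset.coe_univ]; exact (induceUnivIso T).connected_iff.mpr hT.connected⟩
    refine hT.exists_iso_pathGraph_of_isHamiltonian ((hp u).isHamiltonian_of_mem fun x => ?_)
    simpa [Walk.connectedSupport] using congrArg (x ∈ ·.1) hu
  · rw [φ.numConnAt_eq, numConnAt_pathGraph _ hφ]
end

section
/- In any tree T on n vertices rooted at a vertex v, the number of subtrees of T containing v is at most 2^{n-1}, with equality if and only if T is the star S_n with center v. -/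
open SimpleGraph

open Finset in
lemma card_mem_finsets {V : Type*} [Fintype V] [DecidableEq V] (v : V) :
    Nat.card {s : Finset V // v ∈ s} = 2 ^ (Fintype.card V - 1) := by
  have e : {s : Finset V // v ∈ s} ≃ Finset {u : V // u ≠ v} :=
  { toFun := fun s => s.1.subtype (· ≠ v)
    invFun := fun t =>
      ⟨insert v (t.map (Function.Embedding.subtype _)), mem_insert_self _ _⟩
    left_inv := by
      rintro ⟨s, hs⟩
      ext x
      simp only [Finset.subtype_map, mem_insert, Finset.mem_filter]
      constructor
      · rintro (rfl | ⟨h, _⟩) <;> assumption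
      · intro hx
        by_cases hxv : x = v
        · exact Or.inl hxv
        · exact Or.inr ⟨hx, hxv⟩
    right_inv := by
      intro t
      ext ⟨u, hu⟩
      simp [hu] }
  have hc : Fintype.card {u : V // u ≠ v} = Fintype.card V - 1 := by
    have := Fintype.card_subtype_compl (fun u : V => u = v)
    rwa [Fintype.card_subtype_eq] at this
  rw [Nat.card_eq_of_bijective e e.bijective, Nat.card_eq_fintype_card,
    Fintype.card_finset, hc]

lemma star_connected {V : Type*} (T : SimpleGraph V) (v : V)
    (h : ∀ u : V, u ≠ v → T.Adj v u) (s : Set V) (hv : v ∈ s) :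
    (T.induce s).Connected := by
  rw [SimpleGraph.connected_iff]
  have key : ∀ a : s, (T.induce s).Reachable ⟨v, hv⟩ a := by
    rintro ⟨u, hu⟩
    rcases eq_or_ne u v with rfl | hne
    · exact SimpleGraph.Reachable.refl _
    · exact SimpleGraph.Adj.reachable (by simp [SimpleGraph.comap_adj, h u hne])
  exact ⟨fun a b => (key a).symm.trans (key b), ⟨⟨v, hv⟩⟩⟩

lemma pair_not_connected {V : Type*} (T : SimpleGraph V) {v u : V}
    (hne : u ≠ v) (hna : ¬ T.Adj v u) :
    ¬ (T.induce ({v, u} : Set V)).Connected := by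
  intro h
  have hv : v ∈ ({v, u} : Set V) := by simp
  have hu : u ∈ ({v, u} : Set V) := by simp
  obtain ⟨w⟩ := h.preconnected ⟨v, hv⟩ ⟨u, hu⟩
  have hne' : (⟨v, hv⟩ : ({v, u} : Set V)) ≠ ⟨u, hu⟩ := by
    simp [Subtype.ext_iff, hne.symm]
  have hnil : ¬ w.Nil := SimpleGraph.Walk.not_nil_of_ne hne'
  have hadj : T.Adj v ((w.getVert 1 : ({v, u} : Set V)) : V) :=
    w.adj_snd hnil
  rcases (w.getVert 1).2 with h | h
  · rw [h] at hadj; exact T.irrefl hadj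
  · rw [h] at hadj; exact hna hadj

theorem stmt11 {V : Type*} [Fintype V] (T : SimpleGraph V) (hT : T.IsTree) (v : V) :
    numConnAt T v ≤ 2 ^ (Fintype.card V - 1) ∧
      (numConnAt T v = 2 ^ (Fintype.card V - 1) ↔ ∀ u : V, u ≠ v → T.Adj v u) := by
  classical
  set n := Fintype.card V with hn
  let S1 : Set (Finset V) := {s | v ∈ s ∧ (T.induce (s : Set V)).Connected}
  let S2 : Set (Finset V) := {s | v ∈ s}
  have hsub : S1 ⊆ S2 := fun s hs => hs.1
  have h1 : numConnAt T v = S1.ncard := by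
    rw [numConnAt, ← Nat.card_coe_set_eq]
    rfl
  have h2 : S2.ncard = 2 ^ (n - 1) := by
    rw [← Nat.card_coe_set_eq]
    exact card_mem_finsets v
  have hfin : S2.Finite := Set.toFinite _
  have hle : S1.ncard ≤ S2.ncard := Set.ncard_le_ncard hsub hfin
  refine ⟨by rw [h1, ← h2]; exact hle, ?_, ?_⟩
  · intro heq u hune
    have hcards : S2.ncard ≤ S1.ncard := by rw [h2, ← heq, h1]
    have hSeq : S1 = S2 := Set.eq_of_subset_of_ncard_le hsub hcards hfin
    by_contra hna
    have hmem : ({v, u} : Finset V) ∈ S2 := by simp [S2]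
    rw [← hSeq] at hmem
    have hconn := hmem.2
    have hcoe : ((({v, u} : Finset V) : Set V)) = ({v, u} : Set V) := by simp
    rw [hcoe] at hconn
    exact pair_not_connected T hune hna hconn
  · intro h
    have hSeq : S1 = S2 := by
      apply Set.Subset.antisymm hsub
      intro s hs
      exact ⟨hs, star_connected T v h _ (by exact_mod_cast hs)⟩
    rw [h1, hSeq, h2]
end

section
/- The banner graph B_n (n ≥ 4) has exactly 2 + n + 7·2^{n-4} connected induced subgraphs. -/
open SimpleGraph

set_option linter.unnecessarySimpa false

lemma banner_adj_iff {n : ℕ} {u v : Fin n} : (banner n).Adj u v ↔ ((u:ℕ) ≠ (v:ℕ) ∧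
    (((u:ℕ)+1 = v ∧ (v:ℕ) ≤ 3) ∨ ((u:ℕ) = 0 ∧ (v:ℕ) = 3) ∨ ((u:ℕ) = 0 ∧ 4 ≤ (v:ℕ)) ∨
     ((v:ℕ)+1 = u ∧ (u:ℕ) ≤ 3) ∨ ((v:ℕ) = 0 ∧ (u:ℕ) = 3) ∨ ((v:ℕ) = 0 ∧ 4 ≤ (u:ℕ)))) := by
  simp only [banner, SimpleGraph.fromRel_adj, ne_eq, Fin.ext_iff]
  tauto

lemma reach_of_adj {n : ℕ} {s : Finset (Fin n)} {a b : Fin n} (ha : a ∈ s) (hb : b ∈ s)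
    (h : (banner n).Adj a b) :
    ((banner n).induce (↑s : Set (Fin n))).Reachable ⟨a, by simpa using ha⟩ ⟨b, by simpa using hb⟩ :=
  SimpleGraph.Adj.reachable (by simpa using h)

lemma Reachable.exists_adj' {V : Type*} {G : SimpleGraph V} {a b : V} (h : G.Reachable a b)
    (hab : a ≠ b) : ∃ c, G.Adj a c := by
  obtain ⟨p⟩ := h
  cases p with
  | nil => exact absurd rfl hab
  | cons h _ => exact ⟨_, h⟩

lemma exists_adj_mem {n : ℕ} {s : Finset (Fin n)} (h : ((banner n).induce (↑s : Set (Fin n))).Connected)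
    {v w : Fin n} (hv : v ∈ s) (hw : w ∈ s) (hvw : v ≠ w) : ∃ u ∈ s, (banner n).Adj v u := by
  obtain ⟨c, hc⟩ := Reachable.exists_adj'
    (h.preconnected ⟨v, by simpa using hv⟩ ⟨w, by simpa using hw⟩)
    (by simpa [Subtype.ext_iff] using hvw)
  exact ⟨c.1, by simpa using c.2, by simpa using hc⟩

set_option maxHeartbeats 1000000 in
lemma banner_conn_iff {n : ℕ} (hn : 4 ≤ n) (s : Finset (Fin n)) :
    ((banner n).induce (↑s : Set (Fin n))).Connected ↔
      ((∃ v, s = {v}) ∨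
       ((⟨0, by omega⟩ : Fin n) ∈ s ∧
         s ∩ {(⟨1, by omega⟩ : Fin n), ⟨2, by omega⟩, ⟨3, by omega⟩} ≠ {(⟨2, by omega⟩ : Fin n)}) ∨
       s = {(⟨1, by omega⟩ : Fin n), ⟨2, by omega⟩} ∨
       s = {(⟨2, by omega⟩ : Fin n), ⟨3, by omega⟩} ∨
       s = {(⟨1, by omega⟩ : Fin n), ⟨2, by omega⟩, ⟨3, by omega⟩}) := by
  set v0 : Fin n := ⟨0, by omega⟩ with hv0
  set v1 : Fin n := ⟨1, by omega⟩ with hv1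
  set v2 : Fin n := ⟨2, by omega⟩ with hv2
  set v3 : Fin n := ⟨3, by omega⟩ with hv3
  have e0 : (v0:ℕ) = 0 := rfl
  have e1 : (v1:ℕ) = 1 := rfl
  have e2 : (v2:ℕ) = 2 := rfl
  have e3 : (v3:ℕ) = 3 := rfl
  constructor
  · intro h
    rcases Nat.lt_or_ge s.card 2 with hc | hc
    · have hne : s.Nonempty := by
        obtain ⟨⟨x, hx⟩⟩ := h.nonempty
        exact ⟨x, by simpa using hx⟩
      left
      exact Finset.card_eq_one.mp (le_antisymm (by omega) (Finset.one_le_card.mpr hne))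
    · have hpend : ∀ v ∈ s, 4 ≤ (v:ℕ) → v0 ∈ s := by
        intro v hv h4
        obtain ⟨w, hw, hwv⟩ := Finset.exists_mem_ne hc v
        obtain ⟨u, hu, hadj⟩ := exists_adj_mem h hv hw (Ne.symm hwv)
        have hval := banner_adj_iff.mp hadj
        have : u = v0 := Fin.ext (by omega)
        exact this ▸ hu
      by_cases h0 : v0 ∈ s
      · right; left
        refine ⟨h0, ?_⟩
        intro heq
        have h2 : v2 ∈ s := (Finset.mem_inter.mp (heq ▸ Finset.mem_singleton_self v2)).1
        have h1 : v1 ∉ s := by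
          intro h1
          have hm : v1 ∈ s ∩ {v1, v2, v3} := Finset.mem_inter.mpr ⟨h1, by simp⟩
          rw [heq, Finset.mem_singleton] at hm
          exact absurd (congrArg Fin.val hm) (by omega)
        have h3 : v3 ∉ s := by
          intro h3
          have hm : v3 ∈ s ∩ {v1, v2, v3} := Finset.mem_inter.mpr ⟨h3, by simp⟩
          rw [heq, Finset.mem_singleton] at hm
          exact absurd (congrArg Fin.val hm) (by omega)
        obtain ⟨u, hu, hadj⟩ := exists_adj_mem h h2 h0 (Fin.ne_of_val_ne (by omega))
        have hval := banner_adj_iff.mp hadj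
        have : u = v1 ∨ u = v3 := by
          rcases (show (u:ℕ) = 1 ∨ (u:ℕ) = 3 by omega) with h' | h'
          · exact Or.inl (Fin.ext (by omega))
          · exact Or.inr (Fin.ext (by omega))
        rcases this with rfl | rfl
        · exact h1 hu
        · exact h3 hu
      · have hsub : ∀ v ∈ s, v = v1 ∨ v = v2 ∨ v = v3 := by
          intro v hv
          have hne0 : (v:ℕ) ≠ 0 := fun h' => h0 ((show v = v0 from Fin.ext (by omega)) ▸ hv)
          have h4 : (v:ℕ) < 4 := by
            by_contra h4
            exact h0 (hpend v hv (by omega))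
          rcases (show (v:ℕ) = 1 ∨ (v:ℕ) = 2 ∨ (v:ℕ) = 3 by omega) with h' | h' | h'
          · exact Or.inl (Fin.ext (by omega))
          · exact Or.inr (Or.inl (Fin.ext (by omega)))
          · exact Or.inr (Or.inr (Fin.ext (by omega)))
        by_cases h1 : v1 ∈ s <;> by_cases h2 : v2 ∈ s <;> by_cases h3 : v3 ∈ s
        · right; right; right; right
          apply Finset.Subset.antisymm
          · intro x hx
            rcases hsub x hx with rfl | rfl | rfl <;> simp
          · intro x hx
            simp only [Finset.mem_insert, Finset.mem_singleton] at hx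
            rcases hx with rfl | rfl | rfl <;> assumption
        · right; right; left
          apply Finset.Subset.antisymm
          · intro x hx
            rcases hsub x hx with rfl | rfl | rfl
            · simp
            · simp
            · exact absurd hx h3
          · intro x hx
            simp only [Finset.mem_insert, Finset.mem_singleton] at hx
            rcases hx with rfl | rfl <;> assumption
        · exfalso
          obtain ⟨u, hu, hadj⟩ := exists_adj_mem h h1 h3 (Fin.ne_of_val_ne (by omega))
          have hval := banner_adj_iff.mp hadj
          rcases hsub u hu with rfl | rfl | rfl <;> [skip; exact h2 hu; skip] <;> omega
        · exfalso
          have hs1 : s ⊆ {v1} := by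
            intro x hx
            rcases hsub x hx with rfl | rfl | rfl
            · simp
            · exact absurd hx h2
            · exact absurd hx h3
          have := Finset.card_le_card hs1
          simp at this; omega
        · right; right; right; left
          apply Finset.Subset.antisymm
          · intro x hx
            rcases hsub x hx with rfl | rfl | rfl
            · exact absurd hx h1
            · simp
            · simp
          · intro x hx
            simp only [Finset.mem_insert, Finset.mem_singleton] at hx
            rcases hx with rfl | rfl <;> assumption
        · exfalso
          have hs1 : s ⊆ {v2} := by
            intro x hx
            rcases hsub x hx with rfl | rfl | rfl
            · exact absurd hx h1
            · simp
            · exact absurd hx h3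
          have := Finset.card_le_card hs1
          simp at this; omega
        · exfalso
          have hs1 : s ⊆ {v3} := by
            intro x hx
            rcases hsub x hx with rfl | rfl | rfl
            · exact absurd hx h1
            · exact absurd hx h2
            · simp
          have := Finset.card_le_card hs1
          simp at this; omega
        · exfalso
          have hs1 : s ⊆ (∅ : Finset (Fin n)) := by
            intro x hx
            rcases hsub x hx with rfl | rfl | rfl
            · exact absurd hx h1
            · exact absurd hx h2
            · exact absurd hx h3
          have := Finset.card_le_card hs1
          simp only [Finset.card_empty] at this
          omega
  · rintro (⟨v, rfl⟩ | ⟨h0, hne⟩ | rfl | rfl | rfl)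
    · rw [connected_iff_exists_forall_reachable]
      refine ⟨⟨v, by simp⟩, ?_⟩
      rintro ⟨w, hw⟩
      have : w = v := by simpa using hw
      subst this
      rfl
    · rw [connected_iff_exists_forall_reachable]
      refine ⟨⟨v0, by simpa using h0⟩, ?_⟩
      rintro ⟨w, hw⟩
      have hws : w ∈ s := by simpa using hw
      rcases Nat.lt_or_ge (w:ℕ) 4 with h4 | h4
      · rcases (show (w:ℕ) = 0 ∨ (w:ℕ) = 1 ∨ (w:ℕ) = 2 ∨ (w:ℕ) = 3 by omega) with h' | h' | h' | h'
        · have : w = v0 := Fin.ext (by omega)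
          subst this; rfl
        · exact (reach_of_adj h0 hws (banner_adj_iff.mpr (by omega)))
        · have hw2 : w = v2 := Fin.ext (by omega)
          have hex : ∃ u ∈ s ∩ {v1, v2, v3}, u ≠ v2 := by
            by_contra hcon
            push_neg at hcon
            apply hne
            apply Finset.Subset.antisymm
            · intro x hx
              simpa using hcon x hx
            · intro x hx
              rw [Finset.mem_singleton] at hx
              subst hx
              exact Finset.mem_inter.mpr ⟨hw2 ▸ hws, by simp⟩
          obtain ⟨u, hu, hune⟩ := hex
          rw [Finset.mem_inter] at hu
          have hu13 : (u:ℕ) = 1 ∨ (u:ℕ) = 3 := by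
            have hm := hu.2
            simp only [Finset.mem_insert, Finset.mem_singleton] at hm
            rcases hm with rfl | rfl | rfl
            · exact Or.inl rfl
            · exact absurd rfl hune
            · exact Or.inr rfl
          have r1 : ((banner n).induce (↑s : Set (Fin n))).Reachable ⟨v0, by simpa using h0⟩ ⟨u, by simpa using hu.1⟩ :=
            reach_of_adj h0 hu.1 (banner_adj_iff.mpr (by omega))
          have r2 : ((banner n).induce (↑s : Set (Fin n))).Reachable ⟨u, by simpa using hu.1⟩ ⟨w, by simpa using hws⟩ :=
            reach_of_adj hu.1 hws (banner_adj_iff.mpr (by omega))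
          exact r1.trans r2
        · exact (reach_of_adj h0 hws (banner_adj_iff.mpr (by omega)))
      · exact (reach_of_adj h0 hws (banner_adj_iff.mpr (by omega)))
    · rw [connected_iff_exists_forall_reachable]
      refine ⟨⟨v1, by simp⟩, ?_⟩
      rintro ⟨w, hw⟩
      have hws : w ∈ ({v1, v2} : Finset (Fin n)) := by simpa using hw
      simp only [Finset.mem_insert, Finset.mem_singleton] at hws
      rcases hws with rfl | rfl
      · rfl
      · exact reach_of_adj (by simp) (by simp) (banner_adj_iff.mpr (by omega))
    · rw [connected_iff_exists_forall_reachable]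
      refine ⟨⟨v2, by simp⟩, ?_⟩
      rintro ⟨w, hw⟩
      have hws : w ∈ ({v2, v3} : Finset (Fin n)) := by simpa using hw
      simp only [Finset.mem_insert, Finset.mem_singleton] at hws
      rcases hws with rfl | rfl
      · rfl
      · exact reach_of_adj (by simp) (by simp) (banner_adj_iff.mpr (by omega))
    · rw [connected_iff_exists_forall_reachable]
      refine ⟨⟨v2, by simp⟩, ?_⟩
      rintro ⟨w, hw⟩
      have hws : w ∈ ({v1, v2, v3} : Finset (Fin n)) := by simpa using hw
      simp only [Finset.mem_insert, Finset.mem_singleton] at hws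
      rcases hws with rfl | rfl | rfl
      · exact reach_of_adj (by simp) (by simp) (banner_adj_iff.mpr (by omega))
      · rfl
      · exact reach_of_adj (by simp) (by simp) (banner_adj_iff.mpr (by omega))

set_option maxHeartbeats 1000000 in
lemma count_Q {n : ℕ} (hn : 4 ≤ n) (Q : Finset (Fin n) → Prop) [DecidablePred Q]
    (hQ : ∀ s, Q s ↔
      ((∃ v, s = {v}) ∨
       ((⟨0, by omega⟩ : Fin n) ∈ s ∧
         s ∩ {(⟨1, by omega⟩ : Fin n), ⟨2, by omega⟩, ⟨3, by omega⟩} ≠ {(⟨2, by omega⟩ : Fin n)}) ∨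
       s = {(⟨1, by omega⟩ : Fin n), ⟨2, by omega⟩} ∨
       s = {(⟨2, by omega⟩ : Fin n), ⟨3, by omega⟩} ∨
       s = {(⟨1, by omega⟩ : Fin n), ⟨2, by omega⟩, ⟨3, by omega⟩})) :
    (Finset.univ.filter Q).card = 2 + n + 7 * 2 ^ (n - 4) := by
  classical
  set v0 : Fin n := ⟨0, by omega⟩ with hv0
  set v1 : Fin n := ⟨1, by omega⟩ with hv1
  set v2 : Fin n := ⟨2, by omega⟩ with hv2
  set v3 : Fin n := ⟨3, by omega⟩ with hv3
  have e0 : (v0:ℕ) = 0 := rfl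
  have e1 : (v1:ℕ) = 1 := rfl
  have e2 : (v2:ℕ) = 2 := rfl
  have e3 : (v3:ℕ) = 3 := rfl
  obtain ⟨T3, hT3⟩ : ∃ T3 : Finset (Fin n), T3 = {v1, v2, v3} := ⟨_, rfl⟩
  obtain ⟨Pend, hPend⟩ : ∃ P : Finset (Fin n), P = Finset.univ.filter (fun v : Fin n => 4 ≤ (v:ℕ)) := ⟨_, rfl⟩
  obtain ⟨A, hA⟩ : ∃ A : Finset (Finset (Fin n)),
    A = Finset.univ.filter (fun s => v0 ∈ s ∧ s ∩ T3 ≠ {v2}) := ⟨_, rfl⟩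
  obtain ⟨B, hB⟩ : ∃ B : Finset (Finset (Fin n)), B = (Finset.univ.erase v0).image (fun v => {v}) := ⟨_, rfl⟩
  obtain ⟨C, hC⟩ : ∃ C : Finset (Finset (Fin n)), C = {{v1, v2}, {v2, v3}, {v1, v2, v3}} := ⟨_, rfl⟩
  -- basic distinctness
  have hne01 : v0 ≠ v1 := Fin.ne_of_val_ne (by omega)
  have hne02 : v0 ≠ v2 := Fin.ne_of_val_ne (by omega)
  have hne03 : v0 ≠ v3 := Fin.ne_of_val_ne (by omega)
  have hne12 : v1 ≠ v2 := Fin.ne_of_val_ne (by omega)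
  have hne13 : v1 ≠ v3 := Fin.ne_of_val_ne (by omega)
  have hne23 : v2 ≠ v3 := Fin.ne_of_val_ne (by omega)
  -- every vertex is v0, in T3, or in Pend
  have htri : ∀ x : Fin n, x = v0 ∨ x ∈ T3 ∨ x ∈ Pend := by
    intro x
    rcases (show (x:ℕ) = 0 ∨ (x:ℕ) = 1 ∨ (x:ℕ) = 2 ∨ (x:ℕ) = 3 ∨ 4 ≤ (x:ℕ) by omega)
      with h | h | h | h | h
    · exact Or.inl (Fin.ext (by omega))
    · exact Or.inr (Or.inl (by simp [hT3]; left; exact Fin.ext (by omega)))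
    · exact Or.inr (Or.inl (by simp [hT3]; right; left; exact Fin.ext (by omega)))
    · exact Or.inr (Or.inl (by simp [hT3]; right; right; exact Fin.ext (by omega)))
    · exact Or.inr (Or.inr (by simp [hPend, h]))
  have hT3val : ∀ x ∈ T3, (x:ℕ) = 1 ∨ (x:ℕ) = 2 ∨ (x:ℕ) = 3 := by
    intro x hx
    simp only [hT3, Finset.mem_insert, Finset.mem_singleton] at hx
    rcases hx with rfl | rfl | rfl <;> omega
  have hPendval : ∀ x ∈ Pend, 4 ≤ (x:ℕ) := by
    intro x hx
    simpa [hPend] using hx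
  have hv0T3 : v0 ∉ T3 := fun h => by rcases hT3val v0 h with h | h | h <;> omega
  have hv0Pend : v0 ∉ Pend := fun h => by have := hPendval v0 h; omega
  have hT3Pend : ∀ x ∈ T3, x ∉ Pend := fun x hx hp => by
    have := hT3val x hx; have := hPendval x hp; omega
  -- key: recovering components
  have hrecT : ∀ T P : Finset (Fin n), T ⊆ T3 → P ⊆ Pend →
      insert v0 (T ∪ P) ∩ T3 = T := by
    intro T P hT hP
    ext x
    simp only [Finset.mem_inter, Finset.mem_insert, Finset.mem_union]
    constructor
    · rintro ⟨(rfl | hx | hx), hxT3⟩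
      · exact absurd hxT3 hv0T3
      · exact hx
      · exact absurd hxT3 (fun h => hT3Pend x h (hP hx))
    · intro hx
      exact ⟨Or.inr (Or.inl hx), hT hx⟩
  have hrecP : ∀ T P : Finset (Fin n), T ⊆ T3 → P ⊆ Pend →
      insert v0 (T ∪ P) ∩ Pend = P := by
    intro T P hT hP
    ext x
    simp only [Finset.mem_inter, Finset.mem_insert, Finset.mem_union]
    constructor
    · rintro ⟨(rfl | hx | hx), hxP⟩
      · exact absurd hxP hv0Pend
      · exact absurd hxP (hT3Pend x (hT hx))
      · exact hx
    · intro hx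
      exact ⟨Or.inr (Or.inr hx), hP hx⟩
  -- A as an image
  have hAimg : A = ((T3.powerset.erase {v2}) ×ˢ Pend.powerset).image
      (fun p => insert v0 (p.1 ∪ p.2)) := by
    ext s
    simp only [hA, Finset.mem_filter, Finset.mem_univ, true_and, Finset.mem_image,
      Finset.mem_product, Finset.mem_erase, Finset.mem_powerset]
    constructor
    · rintro ⟨h0, hne⟩
      refine ⟨⟨s ∩ T3, s ∩ Pend⟩, ⟨⟨hne, Finset.inter_subset_right⟩, Finset.inter_subset_right⟩, ?_⟩
      ext x
      simp only [Finset.mem_insert, Finset.mem_union, Finset.mem_inter]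
      constructor
      · rintro (rfl | ⟨hx, _⟩ | ⟨hx, _⟩) <;> first | exact h0 | exact hx
      · intro hx
        rcases htri x with rfl | hT | hP
        · exact Or.inl rfl
        · exact Or.inr (Or.inl ⟨hx, hT⟩)
        · exact Or.inr (Or.inr ⟨hx, hP⟩)
    · rintro ⟨⟨T, P⟩, ⟨⟨hTne, hT⟩, hP⟩, rfl⟩
      refine ⟨Finset.mem_insert_self _ _, ?_⟩
      rw [hrecT T P hT hP]
      exact hTne
  have hcardA : A.card = 7 * 2 ^ (n - 4) := by
    rw [hAimg, Finset.card_image_of_injOn]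
    · rw [Finset.card_product, Finset.card_erase_of_mem (by
        simp only [Finset.mem_powerset]
        intro x hx
        rw [Finset.mem_singleton] at hx
        subst hx
        simp [hT3])]
      rw [Finset.card_powerset, Finset.card_powerset]
      have hcT3 : T3.card = 3 := by
        rw [hT3, Finset.card_insert_of_notMem (by simp [hne12, hne13]),
          Finset.card_insert_of_notMem (by simp [hne23]), Finset.card_singleton]
      have hcPend : Pend.card = n - 4 := by
        have : Pend = Finset.univ \ {v0, v1, v2, v3} := by
          ext x
          simp only [hPend, Finset.mem_filter, Finset.mem_univ, true_and, Finset.mem_sdiff,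
            Finset.mem_insert, Finset.mem_singleton]
          constructor
          · intro hx
            rintro (rfl | rfl | rfl | rfl) <;> omega
          · intro hx
            rcases htri x with rfl | hT | hP
            · exact absurd (Or.inl rfl) hx
            · rcases (by simpa [hT3] using hT : x = v1 ∨ x = v2 ∨ x = v3) with rfl | rfl | rfl
              · exact absurd (Or.inr (Or.inl rfl)) hx
              · exact absurd (Or.inr (Or.inr (Or.inl rfl))) hx
              · exact absurd (Or.inr (Or.inr (Or.inr rfl))) hx
            · exact hPendval x hP
        rw [this, Finset.card_sdiff_of_subset (Finset.subset_univ _), Finset.card_univ, Fintype.card_fin]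
        have : ({v0, v1, v2, v3} : Finset (Fin n)).card = 4 := by
          rw [Finset.card_insert_of_notMem (by simp [hne01, hne02, hne03]),
            Finset.card_insert_of_notMem (by simp [hne12, hne13]),
            Finset.card_insert_of_notMem (by simp [hne23]), Finset.card_singleton]
        rw [this]
      rw [hcT3, hcPend]
      norm_num
    · rintro ⟨T, P⟩ hTP ⟨T', P'⟩ hTP' heq
      simp only [Finset.mem_coe, Finset.mem_product, Finset.mem_erase, Finset.mem_powerset] at hTP hTP'
      have hT := hTP.1.2
      have hP := hTP.2
      have hT' := hTP'.1.2
      have hP' := hTP'.2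
      have h1 : T = T' := by
        have := congrArg (· ∩ T3) heq
        simpa [hrecT T P hT hP, hrecT T' P' hT' hP'] using this
      have h2 : P = P' := by
        have := congrArg (· ∩ Pend) heq
        simpa [hrecP T P hT hP, hrecP T' P' hT' hP'] using this
      simp [h1, h2]
  have hcardB : B.card = n - 1 := by
    rw [hB, Finset.card_image_of_injective _ (fun a b h => by
      simpa using h), Finset.card_erase_of_mem (Finset.mem_univ _), Finset.card_univ,
      Fintype.card_fin]
  have hcardC : C.card = 3 := by
    have hne_a : ({v1, v2} : Finset (Fin n)) ≠ {v2, v3} := by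
      intro h
      have : v1 ∈ ({v2, v3} : Finset (Fin n)) := h ▸ (by simp)
      simp only [Finset.mem_insert, Finset.mem_singleton] at this
      rcases this with h' | h'
      · exact hne12 h'
      · exact hne13 h'
    have hne_b : ({v1, v2} : Finset (Fin n)) ≠ {v1, v2, v3} := by
      intro h
      have : v3 ∈ ({v1, v2} : Finset (Fin n)) := h ▸ (by simp)
      simp only [Finset.mem_insert, Finset.mem_singleton] at this
      rcases this with h' | h'
      · exact hne13 h'.symm
      · exact hne23 h'.symm
    have hne_c : ({v2, v3} : Finset (Fin n)) ≠ {v1, v2, v3} := by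
      intro h
      have : v1 ∈ ({v2, v3} : Finset (Fin n)) := h ▸ (by simp)
      simp only [Finset.mem_insert, Finset.mem_singleton] at this
      rcases this with h' | h'
      · exact hne12 h'
      · exact hne13 h'
    rw [hC, Finset.card_insert_of_notMem (by simp [hne_a, hne_b]),
      Finset.card_insert_of_notMem (by simp [hne_c]), Finset.card_singleton]
  -- the filter equals the union
  have hunion : Finset.univ.filter Q = (A ∪ B) ∪ C := by
    ext s
    simp only [Finset.mem_filter, Finset.mem_univ, true_and, Finset.mem_union]
    rw [hQ]
    constructor
    · rintro (⟨v, rfl⟩ | ⟨h0, hne⟩ | rfl | rfl | rfl)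
      · by_cases hveq : v = v0
        · subst hveq
          left; left
          simp only [hA, Finset.mem_filter, Finset.mem_univ, true_and]
          refine ⟨Finset.mem_singleton_self _, ?_⟩
          intro h
          have : v2 ∈ ({v0} : Finset (Fin n)) ∩ T3 := h ▸ Finset.mem_singleton_self v2
          rw [Finset.mem_inter, Finset.mem_singleton] at this
          exact hne02 this.1.symm
        · left; right
          simp only [hB, Finset.mem_image, Finset.mem_erase]
          exact ⟨v, ⟨hveq, Finset.mem_univ _⟩, rfl⟩
      · left; left
        simp only [hA, Finset.mem_filter, Finset.mem_univ, true_and]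
        exact ⟨h0, by rw [hT3]; exact hne⟩
      · right; simp [hC]
      · right; simp [hC]
      · right; simp [hC]
    · rintro ((hs | hs) | hs)
      · simp only [hA, Finset.mem_filter, Finset.mem_univ, true_and] at hs
        exact Or.inr (Or.inl ⟨hs.1, by rw [← hT3]; exact hs.2⟩)
      · simp only [hB, Finset.mem_image, Finset.mem_erase] at hs
        obtain ⟨v, _, rfl⟩ := hs
        exact Or.inl ⟨v, rfl⟩
      · simp only [hC, Finset.mem_insert, Finset.mem_singleton] at hs
        rcases hs with rfl | rfl | rfl
        · exact Or.inr (Or.inr (Or.inl rfl))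
        · exact Or.inr (Or.inr (Or.inr (Or.inl rfl)))
        · exact Or.inr (Or.inr (Or.inr (Or.inr rfl)))
  -- disjointness
  have hdAB : Disjoint A B := by
    rw [Finset.disjoint_left]
    intro s hsA hsB
    simp only [hA, Finset.mem_filter, Finset.mem_univ, true_and] at hsA
    simp only [hB, Finset.mem_image, Finset.mem_erase] at hsB
    obtain ⟨v, ⟨hv, -⟩, rfl⟩ := hsB
    rw [Finset.mem_singleton] at hsA
    exact hv hsA.1.symm
  have hv0C : ∀ s ∈ C, v0 ∉ s := by
    intro s hs
    simp only [hC, Finset.mem_insert, Finset.mem_singleton] at hs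
    rcases hs with rfl | rfl | rfl <;>
      · simp only [Finset.mem_insert, Finset.mem_singleton]
        push_neg
        first
        | exact ⟨hne01, hne02⟩
        | exact ⟨hne02, hne03⟩
        | exact ⟨hne01, hne02, hne03⟩
  have hcard2C : ∀ s ∈ C, 2 ≤ s.card := by
    intro s hs
    simp only [hC, Finset.mem_insert, Finset.mem_singleton] at hs
    rcases hs with rfl | rfl | rfl
    · rw [Finset.card_insert_of_notMem (by simp [hne12]), Finset.card_singleton]
    · rw [Finset.card_insert_of_notMem (by simp [hne23]), Finset.card_singleton]
    · rw [Finset.card_insert_of_notMem (by simp [hne12, hne13]),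
        Finset.card_insert_of_notMem (by simp [hne23]), Finset.card_singleton]
      omega
  have hdABC : Disjoint (A ∪ B) C := by
    rw [Finset.disjoint_left]
    intro s hsAB hsC
    rcases Finset.mem_union.mp hsAB with hs | hs
    · simp only [hA, Finset.mem_filter, Finset.mem_univ, true_and] at hs
      exact hv0C s hsC hs.1
    · simp only [hB, Finset.mem_image, Finset.mem_erase] at hs
      obtain ⟨v, -, rfl⟩ := hs
      have := hcard2C _ hsC
      simp at this
  rw [hunion, Finset.card_union_of_disjoint hdABC, Finset.card_union_of_disjoint hdAB,
    hcardA, hcardB, hcardC]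
  have h2 : 1 ≤ 2 ^ (n - 4) := Nat.one_le_two_pow
  omega

theorem stmt13 (n : ℕ) (hn : 4 ≤ n) : numConn (banner n) = 2 + n + 7 * 2 ^ (n - 4) := by
  classical
  rw [numConn,
    Nat.card_congr (Equiv.subtypeEquivRight fun s : Finset (Fin n) => banner_conn_iff hn s),
    Nat.card_eq_fintype_card, Fintype.card_subtype]
  exact count_Q hn _ (fun s => Iff.rfl)
end

section
/- The graph Q_n has exactly n + 2^{n-1} connected induced subgraphs. -/
open SimpleGraph

/-! Vertex `0` of `Q_n` is adjacent to every other vertex, so each of the `2 ^ (n - 1)` vertex sets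
containing it induces a connected subgraph. Deleting `0` leaves the single edge `{1, 2}` and
isolated vertices, so the connected sets avoiding `0` are the `n - 1` singletons and `{1, 2}`. -/

open Finset

theorem Finset.card_filter_mem_univ {α : Type*} [Fintype α] [DecidableEq α] (a : α) :
    #{s : Finset α | a ∈ s} = 2 ^ (Fintype.card α - 1) := by
  have h : ({s : Finset α | a ∈ s} : Finset (Finset α)) =
      (univ.erase a).powerset.image (insert a) := by
    ext s
    simp only [mem_filter, mem_univ, true_and, mem_image, mem_powerset, subset_erase,
      subset_univ]
    exact ⟨fun ha => ⟨s.erase a, notMem_erase a s, insert_erase ha⟩,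
      fun ⟨t, _, hts⟩ => hts ▸ mem_insert_self a t⟩
  rw [h, card_image_of_injOn, card_powerset, card_erase_of_mem (mem_univ a), card_univ]
  exact insert_erase_invOn.2.injOn.mono fun t ht => (subset_erase.1 (mem_powerset.1 ht)).2

namespace SimpleGraph

variable {V : Type*} {G : SimpleGraph V}

theorem induce_connected_of_forall_adj {s : Set V} {c : V} (hc : c ∈ s)
    (hadj : ∀ v ∈ s, v ≠ c → G.Adj c v) : (G.induce s).Connected := by
  rw [connected_iff_exists_forall_reachable]
  refine ⟨⟨c, hc⟩, fun ⟨v, hv⟩ => ?_⟩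
  obtain rfl | hvc := eq_or_ne v c
  · rfl
  · exact Adj.reachable (hadj v hv hvc)

theorem Connected.exists_adj_of_induce {s : Set V} (hs : (G.induce s).Connected)
    (hnt : s.Nontrivial) {u : V} (hu : u ∈ s) : ∃ w ∈ s, G.Adj u w := by
  have := hnt.coe_sort
  obtain ⟨w, hw⟩ := hs.preconnected.exists_adj_of_nontrivial ⟨u, hu⟩
  exact ⟨w, w.2, hw⟩

theorem numConn_eq_two_pow_add_of_forall_adj [Fintype V] (G : SimpleGraph V) {c : V}
    (hc : ∀ v ≠ c, G.Adj c v) :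
    numConn G = 2 ^ (Fintype.card V - 1) +
      Nat.card {s : Finset V // c ∉ s ∧ (G.induce (s : Set V)).Connected} := by
  classical
  have hconn (s : Finset V) (h : c ∈ s) : (G.induce (s : Set V)).Connected :=
    induce_connected_of_forall_adj (mem_coe.2 h) fun v _ hv => hc v hv
  simp only [numConn, Nat.card_eq_fintype_card, Fintype.card_subtype]
  rw [← card_filter_mem_univ c, ← card_filter_add_card_filter_not (p := (c ∈ ·)),
    filter_filter, filter_filter]
  congr 2 <;> ext s <;> simp only [mem_filter, mem_univ, true_and]
  · exact ⟨fun h => h.2, fun h => ⟨hconn s h, h⟩⟩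
  · exact and_comm

end SimpleGraph

namespace Qgraph

variable {m : ℕ}

theorem one_ne_two' : (1 : Fin (m + 3)) ≠ 2 := by
  simp [Fin.ext_iff, Nat.mod_eq_of_lt (show 2 < m + 3 by omega)]

theorem zero_notMem_pair : (0 : Fin (m + 3)) ∉ ({1, 2} : Finset (Fin (m + 3))) := by
  simp [Fin.ext_iff, Nat.mod_eq_of_lt (show 2 < m + 3 by omega)]

theorem zero_adj {v : Fin (m + 3)} (hv : v ≠ 0) : (Qgraph (m + 3)).Adj 0 v := by
  simp [Qgraph, fromRel_adj, Ne.symm hv]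

theorem one_adj_two : (Qgraph (m + 3)).Adj 1 2 := by
  simp [Qgraph, fromRel_adj, one_ne_two', Nat.mod_eq_of_lt (show 2 < m + 3 by omega)]

theorem mem_pair_of_adj {u w : Fin (m + 3)} (huw : (Qgraph (m + 3)).Adj u w) (hu : u ≠ 0)
    (hw : w ≠ 0) : u ∈ ({1, 2} : Finset (Fin (m + 3))) := by
  rw [Qgraph, fromRel_adj] at huw
  have h2 : 2 % (m + 3) = 2 := Nat.mod_eq_of_lt (by omega)
  simp only [mem_insert, mem_singleton, ne_eq, Fin.ext_iff, Fin.coe_ofNat_eq_mod, Nat.zero_mod,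
    Nat.one_mod, h2] at *
  omega

theorem zero_notMem_and_induce_connected_iff {s : Finset (Fin (m + 3))} :
    0 ∉ s ∧ ((Qgraph (m + 3)).induce (s : Set (Fin (m + 3)))).Connected ↔
      s = {1, 2} ∨ ∃ i ≠ 0, s = {i} := by
  constructor
  · rintro ⟨h0, hs⟩
    obtain ⟨⟨x, hx⟩⟩ := hs.nonempty
    obtain ⟨i, rfl⟩ | hnt := Finset.Nonempty.exists_eq_singleton_or_nontrivial ⟨x, hx⟩
    · exact Or.inr ⟨i, fun hi => h0 (hi ▸ mem_singleton_self i), rfl⟩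
    refine Or.inl (eq_of_subset_of_card_le (fun u hu => ?_) ?_)
    · obtain ⟨w, hw, huw⟩ := hs.exists_adj_of_induce hnt.coe hu
      exact mem_pair_of_adj huw (ne_of_mem_of_not_mem hu h0) (ne_of_mem_of_not_mem hw h0)
    · rw [card_pair one_ne_two']
      exact one_lt_card_iff_nontrivial.2 hnt
  · rintro (rfl | ⟨i, hi, rfl⟩)
    · rw [coe_pair]
      exact ⟨zero_notMem_pair, induce_pair_connected_of_adj one_adj_two⟩
    · rw [coe_singleton, induce_singleton_eq_top]
      exact ⟨notMem_singleton.2 hi.symm, connected_top⟩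

theorem card_zero_notMem_and_induce_connected :
    Nat.card {s : Finset (Fin (m + 3)) //
      0 ∉ s ∧ ((Qgraph (m + 3)).induce (s : Set (Fin (m + 3)))).Connected} = m + 3 := by
  classical
  let T : Finset (Finset (Fin (m + 3))) :=
    insert {1, 2} ((univ.erase 0).map ⟨singleton, singleton_injective⟩)
  have hT (s : Finset (Fin (m + 3))) :
      (0 ∉ s ∧ ((Qgraph (m + 3)).induce (s : Set (Fin (m + 3)))).Connected) ↔ s ∈ T := by
    rw [zero_notMem_and_induce_connected_iff]
    simp only [T, mem_insert, mem_map, mem_erase, mem_univ, and_true, Function.Embedding.coeFn_mk]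
    exact or_congr_right (exists_congr fun i => and_congr_right' eq_comm)
  have hpair : ({1, 2} : Finset (Fin (m + 3))) ∉
      (univ.erase 0).map ⟨singleton, singleton_injective⟩ := by
    simp only [mem_map, Function.Embedding.coeFn_mk, not_exists, not_and]
    intro i _ h
    simpa [card_pair one_ne_two'] using congrArg card h
  rw [Nat.card_congr (Equiv.subtypeEquivRight hT), Nat.card_eq_finsetCard,
    card_insert_of_notMem hpair, card_map, card_erase_of_mem (mem_univ 0), card_univ,
    Fintype.card_fin]
  omega

end Qgraph

theorem stmt14 (n : ℕ) (hn : 2 < n) : numConn (Qgraph n) = n + 2 ^ (n - 1) := by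
  obtain ⟨m, rfl⟩ : ∃ m, n = m + 3 := ⟨n - 3, by omega⟩
  rw [numConn_eq_two_pow_add_of_forall_adj _ fun _ => Qgraph.zero_adj,
    Qgraph.card_zero_notMem_and_induce_connected, Fintype.card_fin, add_comm]
end

section
/- The star on n vertices has exactly n - 1 + 2^{n-1} subtrees (connected induced subgraphs), and every tree on n vertices has at most n - 1 + 2^{n-1} connected induced subgraphs, with equality only for the star. -/
open SimpleGraph

/-- The star graph on `Fin n`, with center `0`. -/
def starGraph' (n : ℕ) : SimpleGraph (Fin n) :=
  SimpleGraph.fromRel (fun i _ => (i : ℕ) = 0)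

/-!
A connected vertex set with at least two vertices is the set of endpoints of the edges it induces,
so these sets inject into the nonempty sets of edges: a finite graph has at most
`|V| + 2 ^ |E| - 1` connected induced subgraphs, which for a tree is `n - 1 + 2 ^ (n - 1)`.
In the case of equality every pair of edges is the induced edge set of a connected set, so any two
edges meet; in a tree (which has no triangle) pairwise meeting edges share a common vertex, and the
tree is a star. The star attains the bound: its connected sets are the sets containing the centre
and the singletons of leaves.
-/

open Finset

lemma Finset.card_powerset_erase_empty {α : Type*} [DecidableEq α] (s : Finset α) :
    #(s.powerset.erase ∅) = 2 ^ #s - 1 := by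
  rw [card_erase_of_mem (empty_mem_powerset s), card_powerset]

lemma Finset.card_filter_mem_eq_two_pow {α : Type*} [Fintype α] [DecidableEq α] [Nonempty α]
    (a : α) : #{s : Finset α | a ∈ s} = 2 ^ (Fintype.card α - 1) := by
  have hnot : #{s : Finset α | a ∉ s} = 2 ^ (Fintype.card α - 1) := by
    rw [← card_univ, ← card_erase_of_mem (mem_univ a), ← card_powerset]
    congr 1
    ext s
    simp [subset_erase]
  have htotal := card_filter_add_card_filter_not (s := (univ : Finset (Finset α))) (a ∈ ·)
  rw [hnot, card_univ, Fintype.card_finset] at htotal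
  have hpos : 0 < Fintype.card α := Fintype.card_pos
  have : 2 ^ Fintype.card α = 2 ^ (Fintype.card α - 1) + 2 ^ (Fintype.card α - 1) := by
    rw [← two_mul, ← pow_succ']; congr 1; omega
  omega

namespace SimpleGraph

variable {V : Type*} {G : SimpleGraph V}

lemma exists_adj_of_connected_induce {s : Finset V} (hs : (G.induce (s : Set V)).Connected)
    (hcard : 2 ≤ #s) {x : V} (hx : x ∈ s) : ∃ y ∈ s, G.Adj x y := by
  have : Nontrivial (s : Set V) := Set.nontrivial_coe_sort.mpr (one_lt_card_iff_nontrivial.mp hcard)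
  obtain ⟨y, hxy⟩ := hs.preconnected.exists_adj_of_nontrivial ⟨x, hx⟩
  exact ⟨y, y.2, hxy⟩

lemma IsAcyclic.not_adj_of_adj_of_adj (hG : G.IsAcyclic) {a b c : V} (hab : G.Adj a b)
    (hbc : G.Adj b c) : ¬G.Adj a c := by
  intro hac
  have hpath : (Walk.cons hab (Walk.cons hbc Walk.nil)).IsPath := by
    simp [Walk.isPath_def, hab.ne, hbc.ne, hac.ne]
  have := congrArg (fun p : G.Path a c => p.1.length)
    ((isAcyclic_iff_subsingleton_path.mp hG a c).elim (Path.singleton hac) ⟨_, hpath⟩)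
  simp at this

lemma IsAcyclic.exists_forall_adj_eq_or_eq [Nonempty V] (hG : G.IsAcyclic)
    (hmeet : ∀ a b c d, G.Adj a b → G.Adj c d → a = c ∨ a = d ∨ b = c ∨ b = d) :
    ∃ v, ∀ a b, G.Adj a b → a = v ∨ b = v := by
  by_cases hedge : ∃ a b, G.Adj a b
  swap
  · push Not at hedge
    exact ⟨Classical.arbitrary V, fun a b hab => absurd hab (hedge a b)⟩
  obtain ⟨a, b, hab⟩ := hedge
  by_cases ha : ∀ c d, G.Adj c d → c = a ∨ d = a
  · exact ⟨a, ha⟩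
  push Not at ha
  obtain ⟨c, d, hcd, hca, hda⟩ := ha
  obtain ⟨z, hbz, hza⟩ : ∃ z, G.Adj b z ∧ z ≠ a := by
    rcases hmeet a b c d hab hcd with h | h | rfl | rfl
    · exact absurd h.symm hca
    · exact absurd h.symm hda
    · exact ⟨d, hcd, hda⟩
    · exact ⟨c, hcd.symm, hca⟩
  have key : ∀ q, G.Adj a q → q = b := by
    intro q haq
    rcases hmeet b z a q hbz haq with h | h | h | rfl
    · exact absurd h hab.ne.symm
    · exact h.symm
    · exact absurd h hza
    · exact absurd haq (hG.not_adj_of_adj_of_adj hab hbz)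
  refine ⟨b, fun p q hpq => ?_⟩
  rcases hmeet a b p q hab hpq with rfl | rfl | rfl | rfl
  · exact Or.inr (key q hpq)
  · exact Or.inl (key p hpq.symm)
  · exact Or.inl rfl
  · exact Or.inr rfl

lemma Connected.adj_iff_of_forall_adj_eq_or_eq (hG : G.Connected) {v : V}
    (hv : ∀ a b, G.Adj a b → a = v ∨ b = v) (a b : V) :
    G.Adj a b ↔ a ≠ b ∧ (a = v ∨ b = v) := by
  have hadj_v : ∀ x, x ≠ v → G.Adj x v := by
    intro x hx
    obtain ⟨w⟩ := hG.preconnected x v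
    have hxy := w.adj_snd (w.not_nil_of_ne hx)
    rwa [(hv _ _ hxy).resolve_left hx] at hxy
  refine ⟨fun h => ⟨h.ne, hv a b h⟩, ?_⟩
  rintro ⟨hne, rfl | rfl⟩
  · exact (hadj_v b hne.symm).symm
  · exact hadj_v a hne

section

variable [DecidableEq V] [Fintype G.edgeSet]

lemma mem_iff_exists_mem_edgeFinset_inter_sym2 {s : Finset V}
    (hs : (G.induce (s : Set V)).Connected) (hcard : 2 ≤ #s) {x : V} :
    x ∈ s ↔ ∃ e ∈ G.edgeFinset ∩ s.sym2, x ∈ e := by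
  refine ⟨fun hx => ?_, fun ⟨e, he, hxe⟩ => mem_sym2_iff.mp (mem_inter.mp he).2 x hxe⟩
  obtain ⟨y, hy, hxy⟩ := exists_adj_of_connected_induce hs hcard hx
  exact ⟨s(x, y), mem_inter.mpr ⟨mem_edgeFinset.mpr hxy, mk_mem_sym2_iff.mpr ⟨hx, hy⟩⟩,
    Sym2.mem_mk_left x y⟩

lemma eq_or_eq_of_edgeFinset_inter_sym2_eq_pair {s : Finset V}
    (hs : (G.induce (s : Set V)).Connected) {a b c d : V}
    (h : G.edgeFinset ∩ s.sym2 = {s(a, b), s(c, d)}) : a = c ∨ a = d ∨ b = c ∨ b = d := by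
  have hab : s(a, b) ∈ s.sym2 := (mem_inter.mp (h ▸ mem_insert_self _ _)).2
  have hcd : s(c, d) ∈ s.sym2 := (mem_inter.mp (h ▸ mem_insert_of_mem (mem_singleton_self _))).2
  rw [mk_mem_sym2_iff] at hab hcd
  by_contra! hdisj
  -- a walk in `s` from `a` to `c` leaves `{a, b}` along an induced edge that is neither edge
  obtain ⟨p⟩ := hs.preconnected ⟨a, hab.1⟩ ⟨c, hcd.1⟩
  obtain ⟨dart, -, hfst, hsnd⟩ := p.exists_boundary_dart {x | x.1 = a ∨ x.1 = b} (Or.inl rfl)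
    (by simp [hdisj.1.symm, hdisj.2.2.1.symm])
  have hmem : s(dart.fst.1, dart.snd.1) ∈ G.edgeFinset ∩ s.sym2 :=
    mem_inter.mpr ⟨mem_edgeFinset.mpr dart.adj, mk_mem_sym2_iff.mpr ⟨dart.fst.2, dart.snd.2⟩⟩
  simp only [h, mem_insert, mem_singleton, Sym2.eq_iff] at hmem
  simp only [Set.mem_ofPred_eq] at hfst hsnd
  grind

end

variable [Fintype V]

variable (G) in
open scoped Classical in
noncomputable def nontrivialConnSets : Finset (Finset V) :=
  {s | (G.induce (s : Set V)).Connected ∧ 2 ≤ #s}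

lemma mem_nontrivialConnSets {s : Finset V} :
    s ∈ G.nontrivialConnSets ↔ (G.induce (s : Set V)).Connected ∧ 2 ≤ #s := by
  simp [nontrivialConnSets]

lemma numConn_eq_card_add_card_nontrivialConnSets :
    numConn G = Fintype.card V + #G.nontrivialConnSets := by
  classical
  have hsingle : ({s | (G.induce (s : Set V)).Connected ∧ ¬2 ≤ #s} : Finset (Finset V)) =
      univ.map ⟨singleton, singleton_injective⟩ := by
    ext s
    simp only [mem_filter, mem_univ, true_and, mem_map, Function.Embedding.coeFn_mk]
    constructor
    · rintro ⟨hs, hcard⟩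
      obtain ⟨⟨x, hx⟩⟩ := hs.nonempty
      have : 0 < #s := card_pos.mpr ⟨x, hx⟩
      obtain ⟨a, rfl⟩ := card_eq_one.mp (show #s = 1 by omega)
      exact ⟨a, rfl⟩
    · rintro ⟨a, rfl⟩
      exact ⟨by rw [coe_singleton]; simp, by simp⟩
  have hcard : Fintype.card V = #{s : Finset V | (G.induce (s : Set V)).Connected ∧ ¬2 ≤ #s} := by
    rw [hsingle, card_map, card_univ]
  rw [numConn, Nat.card_eq_fintype_card, Fintype.card_subtype, hcard, nontrivialConnSets,
    add_comm, ← filter_filter, ← filter_filter, card_filter_add_card_filter_not]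

variable [DecidableEq V] [Fintype G.edgeSet]

lemma injOn_edgeFinset_inter_sym2 :
    Set.InjOn (fun s : Finset V => G.edgeFinset ∩ s.sym2) G.nontrivialConnSets := by
  intro s hs t ht hst
  rw [mem_coe, mem_nontrivialConnSets] at hs ht
  ext x
  rw [mem_iff_exists_mem_edgeFinset_inter_sym2 hs.1 hs.2,
    mem_iff_exists_mem_edgeFinset_inter_sym2 ht.1 ht.2, show G.edgeFinset ∩ s.sym2 = _ from hst]

lemma edgeFinset_inter_sym2_mem_powerset_erase_empty {s : Finset V}
    (hs : s ∈ G.nontrivialConnSets) : G.edgeFinset ∩ s.sym2 ∈ G.edgeFinset.powerset.erase ∅ := by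
  rw [mem_nontrivialConnSets] at hs
  obtain ⟨x, hx⟩ := card_pos.mp (by omega : 0 < #s)
  obtain ⟨e, he, -⟩ := (mem_iff_exists_mem_edgeFinset_inter_sym2 hs.1 hs.2).mp hx
  exact mem_erase.mpr ⟨ne_empty_of_mem he, mem_powerset.mpr inter_subset_left⟩

lemma card_nontrivialConnSets_le : #G.nontrivialConnSets ≤ 2 ^ #G.edgeFinset - 1 :=
  card_powerset_erase_empty G.edgeFinset ▸ card_le_card_of_injOn _
    (fun _ => edgeFinset_inter_sym2_mem_powerset_erase_empty) injOn_edgeFinset_inter_sym2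

lemma numConn_le : numConn G ≤ Fintype.card V + (2 ^ #G.edgeFinset - 1) :=
  numConn_eq_card_add_card_nontrivialConnSets (G := G) ▸
    Nat.add_le_add_left card_nontrivialConnSets_le _

lemma eq_or_eq_of_numConn_eq (h : numConn G = Fintype.card V + (2 ^ #G.edgeFinset - 1))
    {a b c d : V} (hab : G.Adj a b) (hcd : G.Adj c d) : a = c ∨ a = d ∨ b = c ∨ b = d := by
  have hcard : #(G.edgeFinset.powerset.erase ∅) ≤ #G.nontrivialConnSets := by
    rw [card_powerset_erase_empty]
    rw [numConn_eq_card_add_card_nontrivialConnSets] at h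
    omega
  have hpair : {s(a, b), s(c, d)} ∈ G.edgeFinset.powerset.erase ∅ := by
    simp [insert_subset_iff, hab, hcd]
  obtain ⟨s, hs, hst⟩ := surjOn_of_injOn_of_card_le _
    (fun _ => edgeFinset_inter_sym2_mem_powerset_erase_empty) injOn_edgeFinset_inter_sym2
    hcard hpair
  exact eq_or_eq_of_edgeFinset_inter_sym2_eq_pair (mem_nontrivialConnSets.mp hs).1 hst

end SimpleGraph

section Star

variable {n : ℕ} [NeZero n]

lemma starGraph'_adj {i j : Fin n} : (starGraph' n).Adj i j ↔ i ≠ j ∧ (i = 0 ∨ j = 0) := by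
  simp only [starGraph', fromRel_adj, Fin.val_eq_zero_iff]

lemma starGraph'_induce_connected_iff (s : Finset (Fin n)) :
    ((starGraph' n).induce (s : Set (Fin n))).Connected ↔ 0 ∈ s ∨ #s = 1 := by
  constructor
  · intro hs
    by_contra! h
    obtain ⟨⟨x, hx⟩⟩ := hs.nonempty
    have : 0 < #s := card_pos.mpr ⟨x, hx⟩
    obtain ⟨y, hy, hxy⟩ := exists_adj_of_connected_induce hs (by omega) hx
    rcases (starGraph'_adj.mp hxy).2 with rfl | rfl
    exacts [h.1 hx, h.1 hy]
  · rintro (h0 | h1)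
    · rw [connected_iff_exists_forall_reachable]
      refine ⟨⟨0, h0⟩, fun ⟨x, hx⟩ => ?_⟩
      by_cases hx0 : x = 0
      · subst hx0; rfl
      · have hadj : ((starGraph' n).induce (s : Set (Fin n))).Adj ⟨x, hx⟩ ⟨0, h0⟩ :=
          starGraph'_adj.mpr ⟨hx0, Or.inr rfl⟩
        exact hadj.reachable.symm
    · obtain ⟨a, rfl⟩ := card_eq_one.mp h1
      rw [coe_singleton]
      simp

lemma numConn_starGraph' : numConn (starGraph' n) = n - 1 + 2 ^ (n - 1) := by
  classical
  have hconn : ∀ s : Finset (Fin n), ((starGraph' n).induce (s : Set (Fin n))).Connected ↔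
      0 ∈ s ∨ (0 ∉ s ∧ #s = 1) := fun s => by
    rw [starGraph'_induce_connected_iff]; tauto
  have hleaves : ({s | 0 ∉ s ∧ #s = 1} : Finset (Finset (Fin n))) =
      powersetCard 1 (univ.erase 0) := by
    ext s
    simp [mem_powersetCard, subset_erase]
  rw [numConn, Nat.card_eq_fintype_card, Fintype.card_subtype, filter_congr fun s _ => hconn s,
    filter_or, card_union_of_disjoint (disjoint_filter.mpr fun _ _ h0 h => h.1 h0), hleaves,
    card_powersetCard, card_erase_of_mem (mem_univ _), card_univ, Fintype.card_fin,
    Nat.choose_one_right, card_filter_mem_eq_two_pow, Fintype.card_fin, add_comm]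

end Star

lemma nonempty_iso_starGraph' {V : Type*} [Fintype V] {G : SimpleGraph V} {v : V}
    (hadj : ∀ a b, G.Adj a b ↔ a ≠ b ∧ (a = v ∨ b = v)) :
    Nonempty (G ≃g starGraph' (Fintype.card V)) := by
  have : Nonempty V := ⟨v⟩
  have : NeZero (Fintype.card V) := ⟨Fintype.card_ne_zero⟩
  let e := (Fintype.equivFin V).trans (Equiv.swap (Fintype.equivFin V v) 0)
  have hev : e v = 0 := by simp [e]
  refine ⟨⟨e, fun {a b} => ?_⟩⟩
  rw [starGraph'_adj, hadj, ← hev, e.injective.ne_iff, e.injective.eq_iff, e.injective.eq_iff]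

theorem stmt16 (n : ℕ) (hn : 1 ≤ n) :
    numConn (starGraph' n) = n - 1 + 2 ^ (n - 1) ∧
      ∀ {V : Type} [Fintype V] (T : SimpleGraph V), T.IsTree → Fintype.card V = n →
        numConn T ≤ n - 1 + 2 ^ (n - 1) ∧
          (numConn T = n - 1 + 2 ^ (n - 1) → Nonempty (T ≃g starGraph' n)) := by
  have : NeZero n := ⟨by omega⟩
  refine ⟨numConn_starGraph', fun {V} _ T hT hcard => ?_⟩
  classical
  have hedges : #T.edgeFinset = n - 1 := by
    have := hT.card_edgeFinset
    omega
  have hbound : Fintype.card V + (2 ^ #T.edgeFinset - 1) = n - 1 + 2 ^ (n - 1) := by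
    have := Nat.one_le_two_pow (n := n - 1)
    rw [hedges, hcard]
    omega
  refine ⟨hbound ▸ numConn_le, fun heq => ?_⟩
  have : Nonempty V := hT.connected.nonempty
  obtain ⟨v, hv⟩ := hT.isAcyclic.exists_forall_adj_eq_or_eq fun _ _ _ _ =>
    eq_or_eq_of_numConn_eq (hbound ▸ heq)
  subst hcard
  exact nonempty_iso_starGraph' (hT.connected.adj_iff_of_forall_adj_eq_or_eq hv)
end
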